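/- arXiv:1705.07191 — 13 statements merged into one kernel-verified Lean document; each statement's English description precedes it below -/
import Mathlib

section
/- Let p ≥ 1 and let f, g : [a,b] → ℝ be two positive functions with 0 < ∫_a^b f(t)^p dt < ∞ and 0 < ∫_a^b g(t)^p dt < ∞. If there exist real constants 0 < m ≤ M such that m ≤ f(t)/g(t) ≤ M for all t ∈ [a,b], then (∫_a^b f(t)^p dt)^(1/p) + (∫_a^b g(t)^p dt)^(1/p) ≤ c₁ · (∫_a^b (f(t)+g(t))^p dt)^(1/p), where c₁ = (M(m+1) + (M+1)) / ((m+1)(M+1)). -/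
open MeasureTheory

/-- Reverse Minkowski inequality for the classical integral on [a,b]. -/
theorem reverse_minkowski_classical
    (a b p m M : ℝ) (hab : a < b) (hp : 1 ≤ p)
    (f g : ℝ → ℝ)
    (hf_pos : ∀ t ∈ Set.Icc a b, 0 < f t)
    (hg_pos : ∀ t ∈ Set.Icc a b, 0 < g t)
    (hf_int : IntervalIntegrable (fun t => f t ^ p) volume a b)
    (hg_int : IntervalIntegrable (fun t => g t ^ p) volume a b)
    (hf_pos_int : 0 < ∫ t in a..b, f t ^ p)
    (hg_pos_int : 0 < ∫ t in a..b, g t ^ p)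
    (hm : 0 < m) (hmM : m ≤ M)
    (hbound : ∀ t ∈ Set.Icc a b, m ≤ f t / g t ∧ f t / g t ≤ M) :
    (∫ t in a..b, f t ^ p) ^ (1 / p) + (∫ t in a..b, g t ^ p) ^ (1 / p) ≤
      ((M * (m + 1) + (M + 1)) / ((m + 1) * (M + 1))) *
        (∫ t in a..b, (f t + g t) ^ p) ^ (1 / p) := by
  have hp0 : (0:ℝ) < p := lt_of_lt_of_le one_pos hp
  have hp0' : p ≠ 0 := hp0.ne'
  have hM : (0:ℝ) < M := lt_of_lt_of_le hm hmM
  have hM1 : (0:ℝ) < M + 1 := by linarith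
  have hm1 : (0:ℝ) < m + 1 := by linarith
  -- pointwise bounds on Icc
  have hfMg : ∀ t ∈ Set.Icc a b, f t ≤ M * g t := fun t ht => by
    have := (hbound t ht).2
    have hg := hg_pos t ht
    rwa [div_le_iff₀ hg] at this
  have hmgf : ∀ t ∈ Set.Icc a b, m * g t ≤ f t := fun t ht => by
    have := (hbound t ht).1
    have hg := hg_pos t ht
    rwa [le_div_iff₀ hg] at this
  -- measurability / integrability of (f+g)^p on Ioc a b
  have hIoc : Set.Ioc a b ⊆ Set.Icc a b := Set.Ioc_subset_Icc_self
  have hcont : Continuous fun x : ℝ => x ^ (1/p) :=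
    Real.continuous_rpow_const (by positivity)
  have hcontp : Continuous fun x : ℝ => x ^ p :=
    Real.continuous_rpow_const hp0.le
  have hfm : AEStronglyMeasurable (fun t => (f t ^ p) ^ (1/p))
      (volume.restrict (Set.Ioc a b)) :=
    hcont.comp_aestronglyMeasurable
      ((intervalIntegrable_iff_integrableOn_Ioc_of_le hab.le).mp hf_int).aestronglyMeasurable
  have hgm : AEStronglyMeasurable (fun t => (g t ^ p) ^ (1/p))
      (volume.restrict (Set.Ioc a b)) :=
    hcont.comp_aestronglyMeasurable
      ((intervalIntegrable_iff_integrableOn_Ioc_of_le hab.le).mp hg_int).aestronglyMeasurable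
  have hsum_m : AEStronglyMeasurable
      (fun t => ((f t ^ p) ^ (1/p) + (g t ^ p) ^ (1/p)) ^ p)
      (volume.restrict (Set.Ioc a b)) :=
    hcontp.comp_aestronglyMeasurable (hfm.add hgm)
  have hae : ∀ᵐ t ∂(volume.restrict (Set.Ioc a b)),
      ((f t ^ p) ^ (1/p) + (g t ^ p) ^ (1/p)) ^ p = (f t + g t) ^ p := by
    filter_upwards [self_mem_ae_restrict measurableSet_Ioc] with t ht
    have hf := hf_pos t (hIoc ht)
    have hg := hg_pos t (hIoc ht)
    rw [one_div, Real.rpow_rpow_inv hf.le hp0', Real.rpow_rpow_inv hg.le hp0']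
  have hfgm : AEStronglyMeasurable (fun t => (f t + g t) ^ p)
      (volume.restrict (Set.Ioc a b)) := hsum_m.congr hae
  -- domination
  have hdom : Integrable (fun t => (M+1)^p * g t ^ p)
      (volume.restrict (Set.Ioc a b)) :=
    (((intervalIntegrable_iff_integrableOn_Ioc_of_le hab.le).mp hg_int)).const_mul _
  have hfg_int : IntervalIntegrable (fun t => (f t + g t) ^ p) volume a b := by
    rw [intervalIntegrable_iff_integrableOn_Ioc_of_le hab.le]
    refine hdom.mono hfgm ?_
    filter_upwards [self_mem_ae_restrict measurableSet_Ioc] with t ht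
    have hf := hf_pos t (hIoc ht)
    have hg := hg_pos t (hIoc ht)
    have h1 : f t + g t ≤ (M+1) * g t := by
      have := hfMg t (hIoc ht); nlinarith
    have h2 : (f t + g t) ^ p ≤ ((M+1) * g t) ^ p :=
      Real.rpow_le_rpow (by positivity) h1 hp0.le
    rw [Real.norm_eq_abs, Real.norm_eq_abs, abs_of_nonneg (by positivity),
      abs_of_nonneg (by positivity)]
    calc (f t + g t) ^ p ≤ ((M+1) * g t) ^ p := h2
      _ = (M+1)^p * g t ^ p := Real.mul_rpow hM1.le hg.le
  -- key integral inequalities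
  have hInt_fg_nonneg : 0 ≤ ∫ t in a..b, (f t + g t) ^ p := by
    apply intervalIntegral.integral_nonneg hab.le
    intro t ht
    have hf := hf_pos t ht
    exact Real.rpow_nonneg (by have := hg_pos t ht; linarith) p
  have hkey1 : ∫ t in a..b, f t ^ p ≤ (M/(M+1))^p * ∫ t in a..b, (f t + g t) ^ p := by
    rw [← intervalIntegral.integral_const_mul]
    apply intervalIntegral.integral_mono_on hab.le hf_int (hfg_int.const_mul _)
    intro t ht
    have hf := hf_pos t ht
    have hg := hg_pos t ht
    have h1 : f t ≤ M/(M+1) * (f t + g t) := by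
      rw [div_mul_eq_mul_div, le_div_iff₀ hM1]
      have := hfMg t ht; nlinarith
    calc f t ^ p ≤ (M/(M+1) * (f t + g t)) ^ p :=
          Real.rpow_le_rpow hf.le h1 hp0.le
      _ = (M/(M+1))^p * (f t + g t) ^ p := Real.mul_rpow (by positivity) (by positivity)
  have hkey2 : ∫ t in a..b, g t ^ p ≤ (1/(m+1))^p * ∫ t in a..b, (f t + g t) ^ p := by
    rw [← intervalIntegral.integral_const_mul]
    apply intervalIntegral.integral_mono_on hab.le hg_int (hfg_int.const_mul _)
    intro t ht
    have hf := hf_pos t ht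
    have hg := hg_pos t ht
    have h1 : g t ≤ 1/(m+1) * (f t + g t) := by
      rw [div_mul_eq_mul_div, le_div_iff₀ hm1]
      have := hmgf t ht; nlinarith
    calc g t ^ p ≤ (1/(m+1) * (f t + g t)) ^ p :=
          Real.rpow_le_rpow hg.le h1 hp0.le
      _ = (1/(m+1))^p * (f t + g t) ^ p := Real.mul_rpow (by positivity) (by positivity)
  -- take p-th roots
  have hroot1 : (∫ t in a..b, f t ^ p) ^ (1/p) ≤
      M/(M+1) * (∫ t in a..b, (f t + g t) ^ p) ^ (1/p) := by
    calc (∫ t in a..b, f t ^ p) ^ (1/p)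
        ≤ ((M/(M+1))^p * ∫ t in a..b, (f t + g t) ^ p) ^ (1/p) :=
          Real.rpow_le_rpow hf_pos_int.le hkey1 (by positivity)
      _ = M/(M+1) * (∫ t in a..b, (f t + g t) ^ p) ^ (1/p) := by
          rw [Real.mul_rpow (by positivity) hInt_fg_nonneg,
            ← Real.rpow_mul (by positivity), mul_one_div, div_self hp0', Real.rpow_one]
  have hroot2 : (∫ t in a..b, g t ^ p) ^ (1/p) ≤
      1/(m+1) * (∫ t in a..b, (f t + g t) ^ p) ^ (1/p) := by
    calc (∫ t in a..b, g t ^ p) ^ (1/p)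
        ≤ ((1/(m+1))^p * ∫ t in a..b, (f t + g t) ^ p) ^ (1/p) :=
          Real.rpow_le_rpow hg_pos_int.le hkey2 (by positivity)
      _ = 1/(m+1) * (∫ t in a..b, (f t + g t) ^ p) ^ (1/p) := by
          rw [Real.mul_rpow (by positivity) hInt_fg_nonneg,
            ← Real.rpow_mul (by positivity), mul_one_div, div_self hp0', Real.rpow_one]
  have hc : M/(M+1) + 1/(m+1) = (M * (m + 1) + (M + 1)) / ((m + 1) * (M + 1)) := by
    rw [div_add_div _ _ hM1.ne' hm1.ne', mul_comm (M+1) (m+1)]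
    ring_nf
  calc (∫ t in a..b, f t ^ p) ^ (1/p) + (∫ t in a..b, g t ^ p) ^ (1/p)
      ≤ (M/(M+1) + 1/(m+1)) * (∫ t in a..b, (f t + g t) ^ p) ^ (1/p) := by
        rw [add_mul]; exact add_le_add hroot1 hroot2
    _ = ((M * (m + 1) + (M + 1)) / ((m + 1) * (M + 1))) *
        (∫ t in a..b, (f t + g t) ^ p) ^ (1/p) := by rw [hc]
end

section
/- Let p ≥ 1 and let f, g : [a,b] → ℝ be two positive functions with 0 < ∫_a^b f(t)^p dt < ∞ and 0 < ∫_a^b g(t)^p dt < ∞. If there exist real constants 0 < m ≤ M such that m ≤ f(t)/g(t) ≤ M for all t ∈ [a,b], then (∫_a^b f(t)^p dt)^(2/p) + (∫_a^b g(t)^p dt)^(2/p) ≥ c₂ · (∫_a^b f(t)^p dt)^(1/p) · (∫_a^b g(t)^p dt)^(1/p), where c₂ = (M+1)(m+1)/M − 2. -/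
open MeasureTheory

/-!
Put `A = (∫ f ^ p) ^ (1 / p)` and `B = (∫ g ^ p) ^ (1 / p)`. Integrating `(m g) ^ p ≤ f ^ p ≤ (M g) ^ p`
gives `m B ≤ A ≤ M B`, hence `A + B ≥ (m + 1) B` and `A + B ≥ (M + 1) A / M`. Multiplying,
`(A + B) ^ 2 ≥ (M + 1) (m + 1) / M · A B`, which is the claim after expanding the square.
-/

theorem mul_le_sq_add_sq_of_mul_le_of_le_mul {x y m M : ℝ} (hy : 0 ≤ y) (hm : 0 ≤ m)
    (hM : 0 < M) (hmx : m * y ≤ x) (hxM : x ≤ M * y) :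
    ((M + 1) * (m + 1) / M - 2) * (x * y) ≤ x ^ 2 + y ^ 2 := by
  have hx : 0 ≤ x := (mul_nonneg hm hy).trans hmx
  have hy_le : (m + 1) * y ≤ x + y := by linarith
  have hx_le : (M + 1) / M * x ≤ x + y := by
    rw [div_mul_eq_mul_div, div_le_iff₀ hM]
    linarith
  have hprod : (M + 1) / M * x * ((m + 1) * y) ≤ (x + y) * (x + y) :=
    mul_le_mul hx_le hy_le (by positivity) (by positivity)
  linear_combination hprod

section IntervalIntegral

variable {a b p c : ℝ} {f g : ℝ → ℝ}

theorem integral_rpow_le_const_rpow_mul (hab : a ≤ b) (hp : 0 ≤ p) (hc : 0 ≤ c)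
    (hf : ∀ t ∈ Set.Icc a b, 0 ≤ f t) (hg : ∀ t ∈ Set.Icc a b, 0 ≤ g t)
    (hfg : ∀ t ∈ Set.Icc a b, f t ≤ c * g t)
    (hf_int : IntervalIntegrable (fun t => f t ^ p) volume a b)
    (hg_int : IntervalIntegrable (fun t => g t ^ p) volume a b) :
    ∫ t in a..b, f t ^ p ≤ c ^ p * ∫ t in a..b, g t ^ p := by
  rw [← intervalIntegral.integral_const_mul]
  refine intervalIntegral.integral_mono_on hab hf_int (hg_int.const_mul _) fun t ht => ?_
  rw [← Real.mul_rpow hc (hg t ht)]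
  exact Real.rpow_le_rpow (hf t ht) (hfg t ht) hp

theorem const_rpow_mul_integral_rpow_le (hab : a ≤ b) (hp : 0 ≤ p) (hc : 0 ≤ c)
    (hg : ∀ t ∈ Set.Icc a b, 0 ≤ g t) (hgf : ∀ t ∈ Set.Icc a b, c * g t ≤ f t)
    (hf_int : IntervalIntegrable (fun t => f t ^ p) volume a b)
    (hg_int : IntervalIntegrable (fun t => g t ^ p) volume a b) :
    c ^ p * ∫ t in a..b, g t ^ p ≤ ∫ t in a..b, f t ^ p := by
  rw [← intervalIntegral.integral_const_mul]
  refine intervalIntegral.integral_mono_on hab (hg_int.const_mul _) hf_int fun t ht => ?_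
  rw [← Real.mul_rpow hc (hg t ht)]
  exact Real.rpow_le_rpow (mul_nonneg hc (hg t ht)) (hgf t ht) hp

end IntervalIntegral

section Rpow

variable {x y c p : ℝ}

theorem rpow_one_div_le_mul_of_le_rpow_mul (hx : 0 ≤ x) (hy : 0 ≤ y) (hc : 0 ≤ c) (hp : 0 < p)
    (h : x ≤ c ^ p * y) : x ^ (1 / p) ≤ c * y ^ (1 / p) := by
  rw [one_div, Real.rpow_inv_le_iff_of_pos hx (by positivity) hp,
    Real.mul_rpow hc (by positivity), Real.rpow_inv_rpow hy hp.ne']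
  exact h

theorem mul_rpow_one_div_le_of_rpow_mul_le (hx : 0 ≤ x) (hy : 0 ≤ y) (hc : 0 ≤ c) (hp : 0 < p)
    (h : c ^ p * y ≤ x) : c * y ^ (1 / p) ≤ x ^ (1 / p) := by
  rw [one_div, Real.le_rpow_inv_iff_of_pos (by positivity) hx hp,
    Real.mul_rpow hc (by positivity), Real.rpow_inv_rpow hy hp.ne']
  exact h

theorem rpow_two_div_eq_sq_rpow_one_div (hx : 0 ≤ x) : x ^ (2 / p) = (x ^ (1 / p)) ^ 2 := by
  rw [← Real.rpow_mul_natCast hx]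
  ring_nf

end Rpow

/-- Companion to the reverse Minkowski inequality for the classical integral. -/
theorem reverse_minkowski_companion_classical
    (a b p m M : ℝ) (hab : a < b) (hp : 1 ≤ p)
    (f g : ℝ → ℝ)
    (hf_pos : ∀ t ∈ Set.Icc a b, 0 < f t)
    (hg_pos : ∀ t ∈ Set.Icc a b, 0 < g t)
    (hf_int : IntervalIntegrable (fun t => f t ^ p) volume a b)
    (hg_int : IntervalIntegrable (fun t => g t ^ p) volume a b)
    (hf_pos_int : 0 < ∫ t in a..b, f t ^ p)
    (hg_pos_int : 0 < ∫ t in a..b, g t ^ p)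
    (hm : 0 < m) (hmM : m ≤ M)
    (hbound : ∀ t ∈ Set.Icc a b, m ≤ f t / g t ∧ f t / g t ≤ M) :
    ((M + 1) * (m + 1) / M - 2) *
        ((∫ t in a..b, f t ^ p) ^ (1 / p) * (∫ t in a..b, g t ^ p) ^ (1 / p)) ≤
      (∫ t in a..b, f t ^ p) ^ (2 / p) + (∫ t in a..b, g t ^ p) ^ (2 / p) := by
  have hM : 0 < M := hm.trans_le hmM
  have hp0 : 0 < p := one_pos.trans_le hp
  have hf : ∀ t ∈ Set.Icc a b, 0 ≤ f t := fun t ht => (hf_pos t ht).le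
  have hg : ∀ t ∈ Set.Icc a b, 0 ≤ g t := fun t ht => (hg_pos t ht).le
  have hlower : ∀ t ∈ Set.Icc a b, m * g t ≤ f t := fun t ht =>
    (le_div_iff₀ (hg_pos t ht)).1 (hbound t ht).1
  have hupper : ∀ t ∈ Set.Icc a b, f t ≤ M * g t := fun t ht =>
    (div_le_iff₀ (hg_pos t ht)).1 (hbound t ht).2
  have hA_ge := mul_rpow_one_div_le_of_rpow_mul_le hf_pos_int.le hg_pos_int.le hm.le hp0
    (const_rpow_mul_integral_rpow_le hab.le hp0.le hm.le hg hlower hf_int hg_int)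
  have hA_le := rpow_one_div_le_mul_of_le_rpow_mul hf_pos_int.le hg_pos_int.le hM.le hp0
    (integral_rpow_le_const_rpow_mul hab.le hp0.le hM.le hf hg hupper hf_int hg_int)
  rw [rpow_two_div_eq_sq_rpow_one_div hf_pos_int.le, rpow_two_div_eq_sq_rpow_one_div hg_pos_int.le]
  exact mul_le_sq_add_sq_of_mul_le_of_le_mul (by positivity) hm.le hM hA_ge hA_le
end

section
/- Let α > 0, p ≥ 1, and let f, g be two positive functions on [0,∞) such that for a fixed x > 0 both J^α f^p(x) < ∞ and J^α g^p(x) < ∞. If there exist real constants 0 < m ≤ M such that m ≤ f(t)/g(t) ≤ M for all t ∈ [0,x], then (J^α f^p(x))^(1/p) + (J^α g^p(x))^(1/p) ≤ c₁ · (J^α (f+g)^p(x))^(1/p), where c₁ = (M(m+1) + (M+1)) / ((m+1)(M+1)). -/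
open MeasureTheory

/-- The Riemann–Liouville fractional integral of order `α` with base point `0`. -/
noncomputable def riemannLiouville (α x : ℝ) (f : ℝ → ℝ) : ℝ :=
  (1 / Real.Gamma α) * ∫ t in (0 : ℝ)..x, (x - t) ^ (α - 1) * f t

/-- Finiteness of the Riemann–Liouville fractional integral, expressed as integrability
of the kernel-weighted integrand. -/
def riemannLiouvilleIntegrable (α x : ℝ) (f : ℝ → ℝ) : Prop :=
  IntervalIntegrable (fun t => (x - t) ^ (α - 1) * f t) volume 0 x

private lemma rl_measurable_rpow_const (q : ℝ) : Measurable fun x : ℝ => x ^ q := by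
  have hrw : (fun x : ℝ => x ^ q) = fun x =>
      if x = 0 then (if q = 0 then 1 else 0)
      else Real.exp (Real.log x * q) * (if x < 0 then Real.cos (q * Real.pi) else 1) := by
    funext y
    rcases lt_trichotomy y 0 with h | rfl | h
    · rw [Real.rpow_def_of_neg h, if_neg h.ne, if_pos h]
    · rw [if_pos rfl]
      rcases eq_or_ne q 0 with rfl | hq
      · simp
      · simp [Real.zero_rpow hq, hq]
    · rw [Real.rpow_def_of_pos h, if_neg h.ne', if_neg (not_lt.2 h.le), mul_one]
  rw [hrw]
  refine Measurable.ite (measurableSet_eq) measurable_const ?_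
  exact (Real.measurable_exp.comp (Real.measurable_log.mul_const q)).mul
    (Measurable.ite (measurableSet_lt measurable_id measurable_const)
      measurable_const measurable_const)

private lemma rl_aux_meas (α p x : ℝ) (hp : 1 ≤ p) (hx : 0 < x)
    (f : ℝ → ℝ) (hf_pos : ∀ t ∈ Set.Ici (0 : ℝ), 0 < f t)
    (hf_int : riemannLiouvilleIntegrable α x (fun t => f t ^ p)) :
    AEMeasurable f (volume.restrict (Set.Ioc 0 x)) := by
  have hp0 : p ≠ 0 := by positivity
  have hres : volume.restrict (Set.Ioc (0:ℝ) x) = volume.restrict (Set.Ioo 0 x) :=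
    (Measure.restrict_congr_set Ioo_ae_eq_Ioc).symm
  rw [hres]
  have hF : AEMeasurable (fun t => (x - t) ^ (α - 1) * f t ^ p)
      (volume.restrict (Set.Ioo 0 x)) := by
    have h1 : IntervalIntegrable (fun t => (x - t) ^ (α - 1) * f t ^ p) volume 0 x := hf_int
    have h2 := ((intervalIntegrable_iff_integrableOn_Ioc_of_le hx.le).mp
      h1).aestronglyMeasurable.aemeasurable
    rwa [hres] at h2
  have hk : Measurable fun t : ℝ => (x - t) ^ (α - 1) :=
    (rl_measurable_rpow_const (α - 1)).comp (measurable_const.sub measurable_id)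
  have hg : AEMeasurable
      (fun t => (((x - t) ^ (α - 1) * f t ^ p) / (x - t) ^ (α - 1)) ^ (1 / p))
      (volume.restrict (Set.Ioo 0 x)) :=
    (rl_measurable_rpow_const (1 / p)).comp_aemeasurable (hF.div hk.aemeasurable)
  apply hg.congr
  filter_upwards [ae_restrict_mem measurableSet_Ioo] with t ht
  have hkpos : 0 < (x - t) ^ (α - 1) := Real.rpow_pos_of_pos (sub_pos.2 ht.2) _
  have hf0 : 0 ≤ f t := (hf_pos t ht.1.le).le
  rw [mul_comm, mul_div_assoc, div_self hkpos.ne', mul_one,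
    ← Real.rpow_mul hf0, mul_one_div, div_self hp0, Real.rpow_one]

private lemma rl_sum_int (α p x : ℝ) (hp : 1 ≤ p) (hx : 0 < x)
    (f g : ℝ → ℝ)
    (hf_pos : ∀ t ∈ Set.Ici (0 : ℝ), 0 < f t)
    (hg_pos : ∀ t ∈ Set.Ici (0 : ℝ), 0 < g t)
    (hf_int : riemannLiouvilleIntegrable α x (fun t => f t ^ p))
    (hg_int : riemannLiouvilleIntegrable α x (fun t => g t ^ p)) :
    riemannLiouvilleIntegrable α x (fun t => (f t + g t) ^ p) := by
  have hfm := rl_aux_meas α p x hp hx f hf_pos hf_int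
  have hgm := rl_aux_meas α p x hp hx g hg_pos hg_int
  have hk : Measurable fun t : ℝ => (x - t) ^ (α - 1) :=
    (rl_measurable_rpow_const (α - 1)).comp (measurable_const.sub measurable_id)
  have hf_int' : IntegrableOn (fun t => (x - t) ^ (α - 1) * f t ^ p) (Set.Ioc 0 x) volume :=
    (intervalIntegrable_iff_integrableOn_Ioc_of_le hx.le).mp hf_int
  have hg_int' : IntegrableOn (fun t => (x - t) ^ (α - 1) * g t ^ p) (Set.Ioc 0 x) volume :=
    (intervalIntegrable_iff_integrableOn_Ioc_of_le hx.le).mp hg_int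
  have hmeas : AEStronglyMeasurable (fun t => (x - t) ^ (α - 1) * (f t + g t) ^ p)
      (volume.restrict (Set.Ioc 0 x)) :=
    (hk.aemeasurable.mul
      ((rl_measurable_rpow_const p).comp_aemeasurable (hfm.add hgm))).aestronglyMeasurable
  rw [riemannLiouvilleIntegrable, intervalIntegrable_iff_integrableOn_Ioc_of_le hx.le]
  apply Integrable.mono'
    ((hf_int'.mul_const ((2:ℝ)^p)).add (hg_int'.mul_const ((2:ℝ)^p))) hmeas
  filter_upwards [ae_restrict_mem measurableSet_Ioc] with t ht
  have htx : 0 ≤ x - t := sub_nonneg.2 ht.2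
  have hk0 : 0 ≤ (x - t) ^ (α - 1) := Real.rpow_nonneg htx _
  have hf0 : 0 < f t := hf_pos t ht.1.le
  have hg0 : 0 < g t := hg_pos t ht.1.le
  have hfg : (f t + g t) ^ p ≤ f t ^ p * 2 ^ p + g t ^ p * 2 ^ p := by
    rcases le_total (f t) (g t) with h | h
    · calc (f t + g t) ^ p ≤ (2 * g t) ^ p :=
            Real.rpow_le_rpow (by positivity) (by linarith) (by positivity)
        _ = 2 ^ p * g t ^ p := Real.mul_rpow (by norm_num) hg0.le
        _ ≤ f t ^ p * 2 ^ p + g t ^ p * 2 ^ p := by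
            have h1 : 0 ≤ f t ^ p * 2 ^ p := by positivity
            linarith [mul_comm ((2:ℝ) ^ p) (g t ^ p)]
    · calc (f t + g t) ^ p ≤ (2 * f t) ^ p :=
            Real.rpow_le_rpow (by positivity) (by linarith) (by positivity)
        _ = 2 ^ p * f t ^ p := Real.mul_rpow (by norm_num) hf0.le
        _ ≤ f t ^ p * 2 ^ p + g t ^ p * 2 ^ p := by
            have h1 : 0 ≤ g t ^ p * 2 ^ p := by positivity
            linarith [mul_comm ((2:ℝ) ^ p) (f t ^ p)]
  have hfgp : 0 ≤ (f t + g t) ^ p := Real.rpow_nonneg (by positivity) _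
  rw [Real.norm_eq_abs, abs_of_nonneg (mul_nonneg hk0 hfgp)]
  calc (x - t) ^ (α - 1) * (f t + g t) ^ p
      ≤ (x - t) ^ (α - 1) * (f t ^ p * 2 ^ p + g t ^ p * 2 ^ p) :=
        mul_le_mul_of_nonneg_left hfg hk0
    _ = (x - t) ^ (α - 1) * f t ^ p * 2 ^ p + (x - t) ^ (α - 1) * g t ^ p * 2 ^ p := by ring

private lemma rl_rpow_le (α p x c : ℝ) (hα : 0 < α) (hp : 1 ≤ p) (hx : 0 < x) (hc : 0 < c)
    (h u : ℝ → ℝ)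
    (hh0 : ∀ t ∈ Set.Icc (0:ℝ) x, 0 ≤ h t)
    (hu0 : ∀ t ∈ Set.Icc (0:ℝ) x, 0 ≤ u t)
    (hle : ∀ t ∈ Set.Icc (0:ℝ) x, h t ≤ c * u t)
    (hhi : riemannLiouvilleIntegrable α x (fun t => h t ^ p))
    (hui : riemannLiouvilleIntegrable α x (fun t => u t ^ p)) :
    (riemannLiouville α x fun t => h t ^ p) ^ (1/p) ≤
      c * (riemannLiouville α x fun t => u t ^ p) ^ (1/p) := by
  have hΓ : 0 < Real.Gamma α := Real.Gamma_pos_of_pos hα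
  have hp0 : (0:ℝ) < p := lt_of_lt_of_le one_pos hp
  have hA0 : 0 ≤ riemannLiouville α x fun t => h t ^ p := by
    apply mul_nonneg (by positivity)
    apply intervalIntegral.integral_nonneg hx.le
    intro t ht
    exact mul_nonneg (Real.rpow_nonneg (sub_nonneg.2 ht.2) _)
      (Real.rpow_nonneg (hh0 t ht) _)
  have key : (riemannLiouville α x fun t => h t ^ p) ≤
      c ^ p * riemannLiouville α x fun t => u t ^ p := by
    unfold riemannLiouville
    rw [mul_left_comm]
    apply mul_le_mul_of_nonneg_left _ (by positivity)
    rw [← intervalIntegral.integral_const_mul]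
    apply intervalIntegral.integral_mono_on hx.le hhi (hui.const_mul _)
    intro t ht
    have hk0 : 0 ≤ (x - t) ^ (α - 1) := Real.rpow_nonneg (sub_nonneg.2 ht.2) _
    have h1 : h t ^ p ≤ (c * u t) ^ p :=
      Real.rpow_le_rpow (hh0 t ht) (hle t ht) hp0.le
    rw [Real.mul_rpow hc.le (hu0 t ht)] at h1
    calc (x - t) ^ (α - 1) * h t ^ p
        ≤ (x - t) ^ (α - 1) * (c ^ p * u t ^ p) := mul_le_mul_of_nonneg_left h1 hk0
      _ = c ^ p * ((x - t) ^ (α - 1) * u t ^ p) := by ring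
  have hB0 : 0 ≤ riemannLiouville α x fun t => u t ^ p := by
    have h2 : 0 ≤ c ^ p * riemannLiouville α x fun t => u t ^ p := hA0.trans key
    nlinarith [Real.rpow_pos_of_pos hc p]
  calc (riemannLiouville α x fun t => h t ^ p) ^ (1/p)
      ≤ (c ^ p * riemannLiouville α x fun t => u t ^ p) ^ (1/p) :=
        Real.rpow_le_rpow hA0 key (by positivity)
    _ = c * (riemannLiouville α x fun t => u t ^ p) ^ (1/p) := by
        rw [Real.mul_rpow (by positivity) hB0, ← Real.rpow_mul hc.le, mul_one_div,
          div_self hp0.ne', Real.rpow_one]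

/-- Reverse Minkowski inequality via the Riemann–Liouville fractional integral. -/
theorem reverse_minkowski_riemann_liouville
    (α p m M x : ℝ) (hα : 0 < α) (hp : 1 ≤ p) (hx : 0 < x)
    (f g : ℝ → ℝ)
    (hf_pos : ∀ t ∈ Set.Ici (0 : ℝ), 0 < f t)
    (hg_pos : ∀ t ∈ Set.Ici (0 : ℝ), 0 < g t)
    (hf_int : riemannLiouvilleIntegrable α x (fun t => f t ^ p))
    (hg_int : riemannLiouvilleIntegrable α x (fun t => g t ^ p))
    (hm : 0 < m) (hmM : m ≤ M)
    (hbound : ∀ t ∈ Set.Icc 0 x, m ≤ f t / g t ∧ f t / g t ≤ M) :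
    (riemannLiouville α x (fun t => f t ^ p)) ^ (1 / p) +
        (riemannLiouville α x (fun t => g t ^ p)) ^ (1 / p) ≤
      ((M * (m + 1) + (M + 1)) / ((m + 1) * (M + 1))) *
        (riemannLiouville α x (fun t => (f t + g t) ^ p)) ^ (1 / p) := by
  have hM : 0 < M := lt_of_lt_of_le hm hmM
  have hsum_int : riemannLiouvilleIntegrable α x (fun t => (f t + g t) ^ p) :=
    rl_sum_int α p x hp hx f g hf_pos hg_pos hf_int hg_int
  have h1 : (riemannLiouville α x fun t => f t ^ p) ^ (1/p) ≤
      (M / (M + 1)) * (riemannLiouville α x fun t => (f t + g t) ^ p) ^ (1/p) := by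
    apply rl_rpow_le α p x (M / (M + 1)) hα hp hx (by positivity) f (fun t => f t + g t)
      (fun t ht => (hf_pos t ht.1).le) (fun t ht => by
        have := hf_pos t ht.1; have := hg_pos t ht.1; positivity)
      _ hf_int hsum_int
    intro t ht
    have hgt : 0 < g t := hg_pos t ht.1
    have hfM : f t ≤ M * g t := (div_le_iff₀ hgt).mp (hbound t ht).2
    rw [div_mul_eq_mul_div, le_div_iff₀ (by linarith : (0:ℝ) < M + 1)]
    show f t * (M + 1) ≤ M * (f t + g t)
    nlinarith
  have h2 : (riemannLiouville α x fun t => g t ^ p) ^ (1/p) ≤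
      (1 / (m + 1)) * (riemannLiouville α x fun t => (f t + g t) ^ p) ^ (1/p) := by
    apply rl_rpow_le α p x (1 / (m + 1)) hα hp hx (by positivity) g (fun t => f t + g t)
      (fun t ht => (hg_pos t ht.1).le) (fun t ht => by
        have := hf_pos t ht.1; have := hg_pos t ht.1; positivity)
      _ hg_int hsum_int
    intro t ht
    have hgt : 0 < g t := hg_pos t ht.1
    have hmf : m * g t ≤ f t := (le_div_iff₀ hgt).mp (hbound t ht).1
    rw [div_mul_eq_mul_div, le_div_iff₀ (by linarith : (0:ℝ) < m + 1), one_mul]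
    show g t * (m + 1) ≤ f t + g t
    nlinarith
  calc (riemannLiouville α x fun t => f t ^ p) ^ (1/p) +
        (riemannLiouville α x fun t => g t ^ p) ^ (1/p)
      ≤ (M / (M + 1)) * (riemannLiouville α x fun t => (f t + g t) ^ p) ^ (1/p) +
        (1 / (m + 1)) * (riemannLiouville α x fun t => (f t + g t) ^ p) ^ (1/p) :=
        add_le_add h1 h2
    _ = ((M * (m + 1) + (M + 1)) / ((m + 1) * (M + 1))) *
        (riemannLiouville α x fun t => (f t + g t) ^ p) ^ (1/p) := by
        rw [← add_mul]
        congr 1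
        rw [div_add_div _ _ (by linarith : (M+1:ℝ) ≠ 0) (by linarith : (m+1:ℝ) ≠ 0),
          div_eq_div_iff (by nlinarith : ((M+1)*(m+1):ℝ) ≠ 0) (by nlinarith : ((m+1)*(M+1):ℝ) ≠ 0)]
        ring
end

section
/- Let α > 0, p ≥ 1, and let f, g be two positive functions on [0,∞) such that for a fixed x > 0 both J^α f^p(x) < ∞ and J^α g^p(x) < ∞. If there exist real constants 0 < m ≤ M such that m ≤ f(t)/g(t) ≤ M for all t ∈ [0,x], then (J^α f^p(x))^(2/p) + (J^α g^p(x))^(2/p) ≥ c₂ · (J^α f^p(x))^(1/p) · (J^α g^p(x))^(1/p), where c₂ = (M+1)(m+1)/M − 2. -/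
open MeasureTheory

/-- Companion inequality via the Riemann–Liouville fractional integral. -/
theorem reverse_minkowski_companion_riemann_liouville
    (α p m M x : ℝ) (hα : 0 < α) (hp : 1 ≤ p) (hx : 0 < x)
    (f g : ℝ → ℝ)
    (hf_pos : ∀ t ∈ Set.Ici (0 : ℝ), 0 < f t)
    (hg_pos : ∀ t ∈ Set.Ici (0 : ℝ), 0 < g t)
    (hf_int : riemannLiouvilleIntegrable α x (fun t => f t ^ p))
    (hg_int : riemannLiouvilleIntegrable α x (fun t => g t ^ p))
    (hm : 0 < m) (hmM : m ≤ M)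
    (hbound : ∀ t ∈ Set.Icc 0 x, m ≤ f t / g t ∧ f t / g t ≤ M) :
    ((M + 1) * (m + 1) / M - 2) *
        ((riemannLiouville α x (fun t => f t ^ p)) ^ (1 / p) *
          (riemannLiouville α x (fun t => g t ^ p)) ^ (1 / p)) ≤
      (riemannLiouville α x (fun t => f t ^ p)) ^ (2 / p) +
        (riemannLiouville α x (fun t => g t ^ p)) ^ (2 / p) := by
  have hΓ : 0 < Real.Gamma α := Real.Gamma_pos_of_pos hα
  have hcpos : (0:ℝ) < 1 / Real.Gamma α := by positivity
  have hp0 : (0:ℝ) < p := lt_of_lt_of_le one_pos hp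
  have hM : 0 < M := lt_of_lt_of_le hm hmM
  have hker : ∀ t ∈ Set.Icc (0:ℝ) x, 0 ≤ (x - t) ^ (α - 1) := fun t ht =>
    Real.rpow_nonneg (by linarith [ht.2]) _
  -- pointwise bounds
  have hfg1 : ∀ t ∈ Set.Icc (0:ℝ) x, f t ^ p ≤ M ^ p * g t ^ p := by
    intro t ht
    have hgt : 0 < g t := hg_pos t ht.1
    have hft : 0 < f t := hf_pos t ht.1
    have h1 : f t ≤ M * g t := by
      have h2 := (hbound t ht).2
      rw [div_le_iff₀ hgt] at h2; linarith
    calc f t ^ p ≤ (M * g t) ^ p := Real.rpow_le_rpow hft.le h1 hp0.le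
      _ = M ^ p * g t ^ p := Real.mul_rpow hM.le hgt.le
  have hfg2 : ∀ t ∈ Set.Icc (0:ℝ) x, m ^ p * g t ^ p ≤ f t ^ p := by
    intro t ht
    have hgt : 0 < g t := hg_pos t ht.1
    have h1 : m * g t ≤ f t := by
      have h2 := (hbound t ht).1
      rw [le_div_iff₀ hgt] at h2; linarith
    calc m ^ p * g t ^ p = (m * g t) ^ p := (Real.mul_rpow hm.le hgt.le).symm
      _ ≤ f t ^ p := Real.rpow_le_rpow (by positivity) h1 hp0.le
  -- integrability of scaled versions
  have hMg_int : IntervalIntegrable (fun t => (x - t) ^ (α - 1) * (M ^ p * g t ^ p))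
      volume 0 x := by
    have h := hg_int.const_mul (M ^ p)
    convert h using 1
    funext t; ring
  have hmg_int : IntervalIntegrable (fun t => (x - t) ^ (α - 1) * (m ^ p * g t ^ p))
      volume 0 x := by
    have h := hg_int.const_mul (m ^ p)
    convert h using 1
    funext t; ring
  -- integral comparisons
  have hI1 : (∫ t in (0:ℝ)..x, (x - t) ^ (α - 1) * f t ^ p)
      ≤ ∫ t in (0:ℝ)..x, (x - t) ^ (α - 1) * (M ^ p * g t ^ p) :=
    intervalIntegral.integral_mono_on hx.le hf_int hMg_int
      (fun t ht => mul_le_mul_of_nonneg_left (hfg1 t ht) (hker t ht))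
  have hI2 : (∫ t in (0:ℝ)..x, (x - t) ^ (α - 1) * (m ^ p * g t ^ p))
      ≤ ∫ t in (0:ℝ)..x, (x - t) ^ (α - 1) * f t ^ p :=
    intervalIntegral.integral_mono_on hx.le hmg_int hf_int
      (fun t ht => mul_le_mul_of_nonneg_left (hfg2 t ht) (hker t ht))
  have hrwM : (fun t => (x - t) ^ (α - 1) * (M ^ p * g t ^ p))
      = fun t => M ^ p * ((x - t) ^ (α - 1) * g t ^ p) := by funext t; ring
  have hrwm : (fun t => (x - t) ^ (α - 1) * (m ^ p * g t ^ p))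
      = fun t => m ^ p * ((x - t) ^ (α - 1) * g t ^ p) := by funext t; ring
  rw [hrwM, intervalIntegral.integral_const_mul] at hI1
  rw [hrwm, intervalIntegral.integral_const_mul] at hI2
  set Jf := riemannLiouville α x (fun t => f t ^ p) with hJf
  set Jg := riemannLiouville α x (fun t => g t ^ p) with hJg
  have hJ1 : Jf ≤ M ^ p * Jg := by
    rw [hJf, hJg]
    unfold riemannLiouville
    calc (1 / Real.Gamma α) * ∫ t in (0:ℝ)..x, (x - t) ^ (α - 1) * f t ^ p
        ≤ (1 / Real.Gamma α) * (M ^ p * ∫ t in (0:ℝ)..x, (x - t) ^ (α - 1) * g t ^ p) :=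
          mul_le_mul_of_nonneg_left hI1 hcpos.le
      _ = M ^ p * ((1 / Real.Gamma α) * ∫ t in (0:ℝ)..x, (x - t) ^ (α - 1) * g t ^ p) := by
          ring
  have hJ2 : m ^ p * Jg ≤ Jf := by
    rw [hJf, hJg]
    unfold riemannLiouville
    calc m ^ p * ((1 / Real.Gamma α) * ∫ t in (0:ℝ)..x, (x - t) ^ (α - 1) * g t ^ p)
        = (1 / Real.Gamma α) * (m ^ p * ∫ t in (0:ℝ)..x, (x - t) ^ (α - 1) * g t ^ p) := by
          ring
      _ ≤ (1 / Real.Gamma α) * ∫ t in (0:ℝ)..x, (x - t) ^ (α - 1) * f t ^ p :=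
          mul_le_mul_of_nonneg_left hI2 hcpos.le
  have hJf0 : 0 ≤ Jf := by
    rw [hJf]; unfold riemannLiouville
    apply mul_nonneg hcpos.le
    apply intervalIntegral.integral_nonneg hx.le
    intro t ht
    exact mul_nonneg (hker t ht) (Real.rpow_nonneg (hf_pos t ht.1).le _)
  have hJg0 : 0 ≤ Jg := by
    rw [hJg]; unfold riemannLiouville
    apply mul_nonneg hcpos.le
    apply intervalIntegral.integral_nonneg hx.le
    intro t ht
    exact mul_nonneg (hker t ht) (Real.rpow_nonneg (hg_pos t ht.1).le _)
  set A := Jf ^ (1/p) with hA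
  set B := Jg ^ (1/p) with hB
  have hA0 : 0 ≤ A := Real.rpow_nonneg hJf0 _
  have hB0 : 0 ≤ B := Real.rpow_nonneg hJg0 _
  have hAB1 : A ≤ M * B := by
    rw [hA, hB]
    calc Jf ^ (1/p) ≤ (M ^ p * Jg) ^ (1/p) :=
          Real.rpow_le_rpow hJf0 hJ1 (by positivity)
      _ = (M ^ p) ^ (1/p) * Jg ^ (1/p) := Real.mul_rpow (by positivity) hJg0
      _ = M * Jg ^ (1/p) := by
          rw [← Real.rpow_mul hM.le, mul_one_div_cancel hp0.ne', Real.rpow_one]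
  have hAB2 : m * B ≤ A := by
    rw [hA, hB]
    calc m * Jg ^ (1/p) = (m ^ p) ^ (1/p) * Jg ^ (1/p) := by
          rw [← Real.rpow_mul hm.le, mul_one_div_cancel hp0.ne', Real.rpow_one]
      _ = (m ^ p * Jg) ^ (1/p) := (Real.mul_rpow (by positivity) hJg0).symm
      _ ≤ Jf ^ (1/p) := Real.rpow_le_rpow (by positivity) hJ2 (by positivity)
  have h2f : Jf ^ ((2:ℝ)/p) = A ^ 2 := by
    rw [hA, show (2:ℝ)/p = (1/p) * 2 by ring, Real.rpow_mul hJf0]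
    norm_num
  have h2g : Jg ^ ((2:ℝ)/p) = B ^ 2 := by
    rw [hB, show (2:ℝ)/p = (1/p) * 2 by ring, Real.rpow_mul hJg0]
    norm_num
  rw [h2f, h2g]
  have hc : (M + 1) * (m + 1) / M - 2 = ((M + 1) * (m + 1) - 2 * M) / M := by
    field_simp
  rw [hc, div_mul_eq_mul_div, div_le_iff₀ hM]
  nlinarith [mul_le_mul_of_nonneg_left hAB2 hA0, mul_le_mul_of_nonneg_left hAB1 hB0,
    mul_nonneg hA0 hB0, mul_nonneg (mul_nonneg hA0 hB0) (sub_nonneg.2 hmM)]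
end

section
/- Let α > 0, p ≥ 1, and let f, g be two positive functions on [1,∞) such that for a fixed x > 1 both H^α f^p(x) < ∞ and H^α g^p(x) < ∞. If there exist real constants 0 < m ≤ M such that m ≤ f(t)/g(t) ≤ M for all t ∈ [1,x], then (H^α f^p(x))^(1/p) + (H^α g^p(x))^(1/p) ≤ c₁ · (H^α (f+g)^p(x))^(1/p), where c₁ = (M(m+1) + (M+1)) / ((m+1)(M+1)). -/
open MeasureTheory

/-- The Hadamard fractional integral of order `α` with base point `1`. -/
noncomputable def hadamardIntegral (α x : ℝ) (f : ℝ → ℝ) : ℝ :=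
  (1 / Real.Gamma α) * ∫ t in (1 : ℝ)..x, (Real.log (x / t)) ^ (α - 1) * (f t / t)

/-- Finiteness of the Hadamard fractional integral, expressed as integrability of the
kernel-weighted integrand. -/
def hadamardIntegrable (α x : ℝ) (f : ℝ → ℝ) : Prop :=
  IntervalIntegrable (fun t => (Real.log (x / t)) ^ (α - 1) * (f t / t)) volume 1 x

lemma kernel_nonneg' {α x t : ℝ} (h1 : 1 ≤ t) (h2 : t ≤ x) :
    0 ≤ (Real.log (x / t)) ^ (α - 1) := by
  apply Real.rpow_nonneg
  apply Real.log_nonneg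
  rw [le_div_iff₀ (lt_of_lt_of_le one_pos h1)]
  simpa using h2

lemma hadamard_aux (α x p c : ℝ) (hx : 1 < x) (hp : 0 < p) (hc : 0 ≤ c)
    (h s : ℝ → ℝ)
    (hh : ∀ t ∈ Set.Icc 1 x, 0 ≤ h t)
    (hs : ∀ t ∈ Set.Icc 1 x, 0 ≤ s t)
    (hle : ∀ t ∈ Set.Icc 1 x, h t ≤ c * s t)
    (hint : hadamardIntegrable α x (fun t => h t ^ p))
    (hint2 : hadamardIntegrable α x (fun t => s t ^ p))
    (hΓ : 0 < Real.Gamma α) :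
    (hadamardIntegral α x (fun t => h t ^ p)) ^ (1 / p) ≤
      c * (hadamardIntegral α x (fun t => s t ^ p)) ^ (1 / p) := by
  have hΓ0 : (0:ℝ) ≤ 1 / Real.Gamma α := by positivity
  have hB0 : 0 ≤ hadamardIntegral α x (fun t => s t ^ p) := by
    apply mul_nonneg hΓ0
    apply intervalIntegral.integral_nonneg hx.le
    intro t ht
    have ht0 : (0:ℝ) ≤ t := le_trans zero_le_one ht.1
    exact mul_nonneg (kernel_nonneg' ht.1 ht.2)
      (div_nonneg (Real.rpow_nonneg (hs t ht) p) ht0)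
  have hA0 : 0 ≤ hadamardIntegral α x (fun t => h t ^ p) := by
    apply mul_nonneg hΓ0
    apply intervalIntegral.integral_nonneg hx.le
    intro t ht
    have ht0 : (0:ℝ) ≤ t := le_trans zero_le_one ht.1
    exact mul_nonneg (kernel_nonneg' ht.1 ht.2)
      (div_nonneg (Real.rpow_nonneg (hh t ht) p) ht0)
  have hAB : hadamardIntegral α x (fun t => h t ^ p) ≤
      c ^ p * hadamardIntegral α x (fun t => s t ^ p) := by
    have key : (∫ t in (1:ℝ)..x, (Real.log (x / t)) ^ (α - 1) * (h t ^ p / t)) ≤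
        ∫ t in (1:ℝ)..x, c ^ p * ((Real.log (x / t)) ^ (α - 1) * (s t ^ p / t)) := by
      apply intervalIntegral.integral_mono_on hx.le hint (hint2.const_mul _)
      intro t ht
      have ht0 : (0:ℝ) < t := lt_of_lt_of_le one_pos ht.1
      have hK := kernel_nonneg' (α := α) ht.1 ht.2
      have h1 : h t ^ p ≤ c ^ p * s t ^ p := by
        calc h t ^ p ≤ (c * s t) ^ p :=
              Real.rpow_le_rpow (hh t ht) (hle t ht) hp.le
          _ = c ^ p * s t ^ p := Real.mul_rpow hc (hs t ht)
      calc (Real.log (x / t)) ^ (α - 1) * (h t ^ p / t)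
          ≤ (Real.log (x / t)) ^ (α - 1) * ((c ^ p * s t ^ p) / t) := by
            apply mul_le_mul_of_nonneg_left _ hK
            exact div_le_div_of_nonneg_right h1 ht0.le
        _ = c ^ p * ((Real.log (x / t)) ^ (α - 1) * (s t ^ p / t)) := by ring
    rw [intervalIntegral.integral_const_mul] at key
    unfold hadamardIntegral
    calc (1 / Real.Gamma α) * ∫ t in (1:ℝ)..x, (Real.log (x / t)) ^ (α - 1) * (h t ^ p / t)
        ≤ (1 / Real.Gamma α) * (c ^ p * ∫ t in (1:ℝ)..x, (Real.log (x / t)) ^ (α - 1) * (s t ^ p / t)) :=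
          mul_le_mul_of_nonneg_left key hΓ0
      _ = c ^ p * ((1 / Real.Gamma α) * ∫ t in (1:ℝ)..x, (Real.log (x / t)) ^ (α - 1) * (s t ^ p / t)) := by ring
  calc (hadamardIntegral α x (fun t => h t ^ p)) ^ (1 / p)
      ≤ (c ^ p * hadamardIntegral α x (fun t => s t ^ p)) ^ (1 / p) :=
        Real.rpow_le_rpow hA0 hAB (by positivity)
    _ = (c ^ p) ^ (1 / p) * (hadamardIntegral α x (fun t => s t ^ p)) ^ (1 / p) :=
        Real.mul_rpow (Real.rpow_nonneg hc p) hB0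
    _ = c * (hadamardIntegral α x (fun t => s t ^ p)) ^ (1 / p) := by
        rw [one_div, Real.rpow_rpow_inv hc hp.ne']

/-- Reverse Minkowski inequality via the Hadamard fractional integral. -/
theorem reverse_minkowski_hadamard
    (α p m M x : ℝ) (hα : 0 < α) (hp : 1 ≤ p) (hx : 1 < x)
    (f g : ℝ → ℝ)
    (hf_pos : ∀ t ∈ Set.Ici (1 : ℝ), 0 < f t)
    (hg_pos : ∀ t ∈ Set.Ici (1 : ℝ), 0 < g t)
    (hf_int : hadamardIntegrable α x (fun t => f t ^ p))
    (hg_int : hadamardIntegrable α x (fun t => g t ^ p))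
    (hm : 0 < m) (hmM : m ≤ M)
    (hbound : ∀ t ∈ Set.Icc 1 x, m ≤ f t / g t ∧ f t / g t ≤ M) :
    (hadamardIntegral α x (fun t => f t ^ p)) ^ (1 / p) +
        (hadamardIntegral α x (fun t => g t ^ p)) ^ (1 / p) ≤
      ((M * (m + 1) + (M + 1)) / ((m + 1) * (M + 1))) *
        (hadamardIntegral α x (fun t => (f t + g t) ^ p)) ^ (1 / p) := by
  have hp0 : 0 < p := lt_of_lt_of_le one_pos hp
  have hM : 0 < M := lt_of_lt_of_le hm hmM
  have hΓ : 0 < Real.Gamma α := Real.Gamma_pos_of_pos hα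
  set K : ℝ → ℝ := fun t => (Real.log (x / t)) ^ (α - 1) with hKdef
  -- pointwise comparisons on Icc
  have hfg : ∀ t ∈ Set.Icc (1:ℝ) x, f t ≤ M * g t := by
    intro t ht
    have hg0 : 0 < g t := hg_pos t ht.1
    exact (div_le_iff₀ hg0).mp (hbound t ht).2
  have hgf : ∀ t ∈ Set.Icc (1:ℝ) x, m * g t ≤ f t := by
    intro t ht
    have hg0 : 0 < g t := hg_pos t ht.1
    exact (le_div_iff₀ hg0).mp (hbound t ht).1
  -- integrability of (f+g)^p
  have hsum_int : hadamardIntegrable α x (fun t => (f t + g t) ^ p) := by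
    have hKm : Measurable K := by
      exact (Real.measurable_log.comp (measurable_const.div measurable_id)).pow measurable_const
    have hFf : IntegrableOn (fun t => K t * (f t ^ p / t)) (Set.Ioc 1 x) volume := by
      have := (intervalIntegrable_iff.mp hf_int)
      simpa [Set.uIoc_of_le hx.le] using this
    have hFg : IntegrableOn (fun t => K t * (g t ^ p / t)) (Set.Ioc 1 x) volume := by
      have := (intervalIntegrable_iff.mp hg_int)
      simpa [Set.uIoc_of_le hx.le] using this
    set μ := volume.restrict (Set.Ioc (1:ℝ) x) with hμ
    have hmem : ∀ᵐ t ∂μ, t ∈ Set.Ioc (1:ℝ) x := ae_restrict_mem measurableSet_Ioc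
    have hne : ∀ᵐ t ∂μ, t ≠ x := by
      refine ae_restrict_of_ae ?_
      have : volume ({x} : Set ℝ) = 0 := measure_singleton x
      rw [ae_iff]
      simpa using this
    have hKpos : ∀ᵐ t ∂μ, 0 < K t ∧ 1 < t := by
      filter_upwards [hmem, hne] with t ht htne
      have htx : t < x := lt_of_le_of_ne ht.2 htne
      have : (1:ℝ) < x / t := (one_lt_div (lt_trans one_pos ht.1)).mpr htx
      exact ⟨Real.rpow_pos_of_pos (Real.log_pos this) _, ht.1⟩
    -- a.e. measurability of f^p and g^p
    have haefp : AEMeasurable (fun t => f t ^ p) μ := by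
      refine AEMeasurable.congr (f := fun t => (K t * (f t ^ p / t)) * (t / K t)) ?_ ?_
      · exact (hFf.aestronglyMeasurable.aemeasurable).mul
          ((measurable_id.div hKm).aemeasurable)
      · filter_upwards [hKpos] with t ht
        have h1 : K t ≠ 0 := ne_of_gt ht.1
        have h2 : t ≠ 0 := ne_of_gt (lt_trans one_pos ht.2)
        field_simp
    have haegp : AEMeasurable (fun t => g t ^ p) μ := by
      refine AEMeasurable.congr (f := fun t => (K t * (g t ^ p / t)) * (t / K t)) ?_ ?_
      · exact (hFg.aestronglyMeasurable.aemeasurable).mul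
          ((measurable_id.div hKm).aemeasurable)
      · filter_upwards [hKpos] with t ht
        have h1 : K t ≠ 0 := ne_of_gt ht.1
        have h2 : t ≠ 0 := ne_of_gt (lt_trans one_pos ht.2)
        field_simp
    have haef : AEMeasurable f μ := by
      refine AEMeasurable.congr (f := fun t => (f t ^ p) ^ p⁻¹) ?_ ?_
      · exact haefp.pow aemeasurable_const
      · filter_upwards [hKpos] with t ht
        exact Real.rpow_rpow_inv (hf_pos t (le_of_lt ht.2)).le hp0.ne'
    have haeg : AEMeasurable g μ := by
      refine AEMeasurable.congr (f := fun t => (g t ^ p) ^ p⁻¹) ?_ ?_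
      · exact haegp.pow aemeasurable_const
      · filter_upwards [hKpos] with t ht
        exact Real.rpow_rpow_inv (hg_pos t (le_of_lt ht.2)).le hp0.ne'
    have haeG : AEMeasurable (fun t => K t * ((f t + g t) ^ p / t)) μ :=
      hKm.aemeasurable.mul (((haef.add haeg).pow aemeasurable_const).div aemeasurable_id)
    have hGint : IntegrableOn (fun t => K t * ((f t + g t) ^ p / t)) (Set.Ioc 1 x) volume := by
      refine Integrable.mono (hFg.const_mul ((M + 1) ^ p)) haeG.aestronglyMeasurable ?_
      filter_upwards [hmem] with t ht
      have ht1 : t ∈ Set.Icc (1:ℝ) x := ⟨ht.1.le, ht.2⟩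
      have ht0 : (0:ℝ) < t := lt_trans one_pos ht.1
      have hK0 : 0 ≤ K t := kernel_nonneg' ht1.1 ht1.2
      have hg0 : 0 < g t := hg_pos t ht1.1
      have hf0 : 0 < f t := hf_pos t ht1.1
      have hsum_le : f t + g t ≤ (M + 1) * g t := by nlinarith [hfg t ht1]
      have h1 : (f t + g t) ^ p ≤ (M + 1) ^ p * g t ^ p := by
        calc (f t + g t) ^ p ≤ ((M + 1) * g t) ^ p :=
              Real.rpow_le_rpow (by positivity) hsum_le hp0.le
          _ = (M + 1) ^ p * g t ^ p := Real.mul_rpow (by positivity) hg0.le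
      have hG0 : 0 ≤ K t * ((f t + g t) ^ p / t) := by positivity
      have hRHS0 : 0 ≤ (M + 1) ^ p * (K t * (g t ^ p / t)) := by positivity
      rw [Real.norm_of_nonneg hG0, Real.norm_of_nonneg hRHS0]
      calc K t * ((f t + g t) ^ p / t) ≤ K t * (((M + 1) ^ p * g t ^ p) / t) := by
            apply mul_le_mul_of_nonneg_left _ hK0
            exact div_le_div_of_nonneg_right h1 ht0.le
        _ = (M + 1) ^ p * (K t * (g t ^ p / t)) := by ring
    rw [hadamardIntegrable, intervalIntegrable_iff]
    simpa [Set.uIoc_of_le hx.le] using hGint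
  -- apply aux twice
  have h1 := hadamard_aux α x p (M / (M + 1)) hx hp0 (by positivity) f (fun t => f t + g t)
    (fun t ht => (hf_pos t ht.1).le)
    (fun t ht => by have := hf_pos t ht.1; have := hg_pos t ht.1; linarith)
    (fun t ht => by
      have hg0 := hg_pos t ht.1
      have hf0 := hf_pos t ht.1
      rw [div_mul_eq_mul_div, le_div_iff₀ (by linarith : (0:ℝ) < M + 1)]
      nlinarith [hfg t ht]) hf_int hsum_int hΓ
  have h2 := hadamard_aux α x p (1 / (m + 1)) hx hp0 (by positivity) g (fun t => f t + g t)
    (fun t ht => (hg_pos t ht.1).le)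
    (fun t ht => by have := hf_pos t ht.1; have := hg_pos t ht.1; linarith)
    (fun t ht => by
      have hg0 := hg_pos t ht.1
      have hf0 := hf_pos t ht.1
      rw [div_mul_eq_mul_div, le_div_iff₀ (by linarith : (0:ℝ) < m + 1)]
      nlinarith [hgf t ht]) hg_int hsum_int hΓ
  have hC0 : 0 ≤ (hadamardIntegral α x (fun t => (f t + g t) ^ p)) ^ (1 / p) := by
    apply Real.rpow_nonneg
    apply mul_nonneg (by positivity)
    apply intervalIntegral.integral_nonneg hx.le
    intro t ht
    have hf0 := hf_pos t ht.1
    have hg0 := hg_pos t ht.1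
    have ht0 : (0:ℝ) ≤ t := le_trans zero_le_one ht.1
    exact mul_nonneg (kernel_nonneg' ht.1 ht.2)
      (div_nonneg (Real.rpow_nonneg (by linarith) p) ht0)
  have hcoef : M / (M + 1) + 1 / (m + 1) = (M * (m + 1) + (M + 1)) / ((m + 1) * (M + 1)) := by
    rw [div_add_div _ _ (by positivity : (M+1) ≠ (0:ℝ)) (by positivity : (m+1) ≠ (0:ℝ))]
    rw [mul_comm (m+1) (M+1)]
    ring_nf
  calc (hadamardIntegral α x (fun t => f t ^ p)) ^ (1 / p) +
        (hadamardIntegral α x (fun t => g t ^ p)) ^ (1 / p)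
      ≤ M / (M + 1) * (hadamardIntegral α x (fun t => (f t + g t) ^ p)) ^ (1 / p) +
        1 / (m + 1) * (hadamardIntegral α x (fun t => (f t + g t) ^ p)) ^ (1 / p) :=
        add_le_add h1 h2
    _ = (M / (M + 1) + 1 / (m + 1)) *
        (hadamardIntegral α x (fun t => (f t + g t) ^ p)) ^ (1 / p) := by ring
    _ = ((M * (m + 1) + (M + 1)) / ((m + 1) * (M + 1))) *
        (hadamardIntegral α x (fun t => (f t + g t) ^ p)) ^ (1 / p) := by rw [hcoef]
end

section
/- Let α > 0, p ≥ 1, and let f, g be two positive functions on [1,∞) such that for a fixed x > 1 both H^α f^p(x) < ∞ and H^α g^p(x) < ∞. If there exist real constants 0 < m ≤ M such that m ≤ f(t)/g(t) ≤ M for all t ∈ [1,x], then (H^α f^p(x))^(2/p) + (H^α g^p(x))^(2/p) ≥ c₂ · (H^α f^p(x))^(1/p) · (H^α g^p(x))^(1/p), where c₂ = (M+1)(m+1)/M − 2. -/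
open MeasureTheory

private lemma scalar_key (m M r : ℝ) (hm : 0 < m) (h1 : m ≤ r) (h2 : r ≤ M) :
    (M+1)*(m+1)*r ≤ M*(r+1)^2 := by
  have hM : 0 < M := lt_of_lt_of_le hm (h1.trans h2)
  rcases le_or_gt (M*m + m + 1 - M) (2*M) with hb | hb
  · have hb2 : (0:ℝ) < 2*M + (M*m + m + 1 - M) := by nlinarith
    nlinarith [sq_nonneg (2*M*r - (M*m + m + 1 - M)),
      mul_nonneg (by linarith : (0:ℝ) ≤ 2*M - (M*m + m + 1 - M)) hb2.le, hM]
  · rcases le_or_gt 1 M with hM1 | hM1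
    · have hm1 : 1 < m := by nlinarith
      nlinarith [mul_nonneg (sub_nonneg.2 h1) (by nlinarith : (0:ℝ) ≤ M*(r+1) - (m+1))]
    · have hx : (0:ℝ) ≤ (M*m + m + 1 - M) - M*(r+M) := by
        nlinarith [mul_nonneg hM.le (sub_nonneg.2 h2)]
      nlinarith [mul_nonneg (sub_nonneg.2 h2) hx,
        mul_nonneg (mul_nonneg hM.le (by linarith : (0:ℝ) ≤ M+1)) (by linarith : (0:ℝ) ≤ M - m)]

private lemma two_var_key (m M F G : ℝ) (hm : 0 < m) (hmM : m ≤ M) (hG : 0 < G)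
    (h1 : m*G ≤ F) (h2 : F ≤ M*G) :
    ((M+1)*(m+1)/M - 2) * (F*G) ≤ F^2 + G^2 := by
  have hM : 0 < M := lt_of_lt_of_le hm hmM
  have hr1 : m ≤ F/G := (le_div_iff₀ hG).2 (by linarith)
  have hr2 : F/G ≤ M := (div_le_iff₀ hG).2 (by linarith)
  have key := scalar_key m M (F/G) hm hr1 hr2
  have e1 : (F/G) * G = F := div_mul_cancel₀ F hG.ne'
  have e2 : (F/G) * G^2 = F*G := by rw [pow_two, ← mul_assoc, e1]
  have key2 : (M+1)*(m+1)*(F*G) ≤ M*(F+G)^2 := by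
    have h := mul_le_mul_of_nonneg_right key (sq_nonneg G)
    calc (M+1)*(m+1)*(F*G) = (M+1)*(m+1)*((F/G)*G^2) := by rw [e2]
      _ = (M+1)*(m+1)*(F/G) * G^2 := by ring
      _ ≤ M*(F/G+1)^2 * G^2 := h
      _ = M*((F/G)*G + G)^2 := by ring
      _ = M*(F+G)^2 := by rw [e1]
  rw [sub_mul, div_mul_eq_mul_div, sub_le_iff_le_add, div_le_iff₀ hM]
  nlinarith [key2]

private lemma hadamard_pos (α x : ℝ) (hα : 0 < α) (hx : 1 < x) (f : ℝ → ℝ)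
    (hf_pos : ∀ t ∈ Set.Ici (1 : ℝ), 0 < f t) (hf_int : hadamardIntegrable α x f) :
    0 < hadamardIntegral α x f := by
  have hΓ : 0 < Real.Gamma α := Real.Gamma_pos_of_pos hα
  have hpos : ∀ t ∈ Set.Ioo (1:ℝ) x,
      0 < (Real.log (x / t)) ^ (α - 1) * (f t / t) := by
    intro t ht
    have ht0 : 0 < t := lt_trans one_pos ht.1
    have hlog : 0 < Real.log (x / t) :=
      Real.log_pos ((one_lt_div ht0).2 ht.2)
    exact mul_pos (Real.rpow_pos_of_pos hlog _)
      (div_pos (hf_pos t (le_of_lt ht.1)) ht0)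
  have := intervalIntegral.intervalIntegral_pos_of_pos_on hf_int hpos hx
  exact mul_pos (by positivity) this

private lemma hadamard_mono (α x : ℝ) (hα : 0 < α) (hx : 1 < x) (f g : ℝ → ℝ) (c : ℝ)
    (hf_int : hadamardIntegrable α x f) (hg_int : hadamardIntegrable α x g)
    (hle : ∀ t ∈ Set.Icc (1:ℝ) x, f t ≤ c * g t) :
    hadamardIntegral α x f ≤ c * hadamardIntegral α x g := by
  have hΓ : 0 < Real.Gamma α := Real.Gamma_pos_of_pos hα
  have hmono : (∫ t in (1:ℝ)..x, (Real.log (x / t)) ^ (α - 1) * (f t / t))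
      ≤ ∫ t in (1:ℝ)..x, c * ((Real.log (x / t)) ^ (α - 1) * (g t / t)) := by
    apply intervalIntegral.integral_mono_on hx.le hf_int (hg_int.const_mul c)
    intro t ht
    have ht0 : 0 < t := lt_of_lt_of_le one_pos ht.1
    have hker : 0 ≤ (Real.log (x / t)) ^ (α - 1) :=
      Real.rpow_nonneg (Real.log_nonneg ((one_le_div ht0).2 ht.2)) _
    have : f t / t ≤ c * g t / t := by
      gcongr
      exact hle t ht
    calc (Real.log (x / t)) ^ (α - 1) * (f t / t)
        ≤ (Real.log (x / t)) ^ (α - 1) * (c * g t / t) := by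
          exact mul_le_mul_of_nonneg_left this hker
      _ = c * ((Real.log (x / t)) ^ (α - 1) * (g t / t)) := by ring
  rw [intervalIntegral.integral_const_mul] at hmono
  unfold hadamardIntegral
  calc (1 / Real.Gamma α) * ∫ t in (1:ℝ)..x, (Real.log (x / t)) ^ (α - 1) * (f t / t)
      ≤ (1 / Real.Gamma α) * (c * ∫ t in (1:ℝ)..x, (Real.log (x / t)) ^ (α - 1) * (g t / t)) :=
        mul_le_mul_of_nonneg_left hmono (by positivity)
    _ = c * ((1 / Real.Gamma α) * ∫ t in (1:ℝ)..x, (Real.log (x / t)) ^ (α - 1) * (g t / t)) := by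
        ring

/-- Companion inequality via the Hadamard fractional integral. -/
theorem reverse_minkowski_companion_hadamard
    (α p m M x : ℝ) (hα : 0 < α) (hp : 1 ≤ p) (hx : 1 < x)
    (f g : ℝ → ℝ)
    (hf_pos : ∀ t ∈ Set.Ici (1 : ℝ), 0 < f t)
    (hg_pos : ∀ t ∈ Set.Ici (1 : ℝ), 0 < g t)
    (hf_int : hadamardIntegrable α x (fun t => f t ^ p))
    (hg_int : hadamardIntegrable α x (fun t => g t ^ p))
    (hm : 0 < m) (hmM : m ≤ M)
    (hbound : ∀ t ∈ Set.Icc 1 x, m ≤ f t / g t ∧ f t / g t ≤ M) :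
    ((M + 1) * (m + 1) / M - 2) *
        ((hadamardIntegral α x (fun t => f t ^ p)) ^ (1 / p) *
          (hadamardIntegral α x (fun t => g t ^ p)) ^ (1 / p)) ≤
      (hadamardIntegral α x (fun t => f t ^ p)) ^ (2 / p) +
        (hadamardIntegral α x (fun t => g t ^ p)) ^ (2 / p) := by
  have hp0 : 0 < p := lt_of_lt_of_le one_pos hp
  have hM : 0 < M := lt_of_lt_of_le hm hmM
  set A := hadamardIntegral α x (fun t => f t ^ p) with hAdef
  set B := hadamardIntegral α x (fun t => g t ^ p) with hBdef
  have hA : 0 < A := hadamard_pos α x hα hx _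
    (fun t ht => Real.rpow_pos_of_pos (hf_pos t ht) p) hf_int
  have hB : 0 < B := hadamard_pos α x hα hx _
    (fun t ht => Real.rpow_pos_of_pos (hg_pos t ht) p) hg_int
  -- pointwise bounds
  have hAB : A ≤ M ^ p * B := by
    apply hadamard_mono α x hα hx _ _ _ hf_int hg_int
    intro t ht
    have hg : 0 < g t := hg_pos t ht.1
    have hfMg : f t ≤ M * g t := (div_le_iff₀ hg).1 (hbound t ht).2
    calc f t ^ p ≤ (M * g t) ^ p :=
          Real.rpow_le_rpow (hf_pos t ht.1).le hfMg hp0.le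
      _ = M ^ p * g t ^ p := Real.mul_rpow hM.le hg.le
  have hBA : m ^ p * B ≤ A := by
    have h : B ≤ (1/m) ^ p * A := by
      apply hadamard_mono α x hα hx _ _ _ hg_int hf_int
      intro t ht
      have hg : 0 < g t := hg_pos t ht.1
      have hmgf : m * g t ≤ f t := (le_div_iff₀ hg).1 (hbound t ht).1
      have : g t ≤ (1/m) * f t := by
        rw [one_div, ← div_eq_inv_mul, le_div_iff₀ hm]
        linarith [hmgf]
      calc g t ^ p ≤ ((1/m) * f t) ^ p :=
            Real.rpow_le_rpow hg.le this hp0.le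
        _ = (1/m) ^ p * f t ^ p := Real.mul_rpow (by positivity) (hf_pos t ht.1).le
    have hmp : 0 < m ^ p := Real.rpow_pos_of_pos hm p
    have := mul_le_mul_of_nonneg_left h hmp.le
    calc m ^ p * B ≤ m ^ p * ((1/m) ^ p * A) := this
      _ = (m * (1/m)) ^ p * A := by rw [Real.mul_rpow hm.le (by positivity)]; ring
      _ = A := by rw [mul_one_div_cancel hm.ne', Real.one_rpow, one_mul]
  -- pass to (1/p)-powers
  have hF : 0 < A ^ (1/p) := Real.rpow_pos_of_pos hA _
  have hG : 0 < B ^ (1/p) := Real.rpow_pos_of_pos hB _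
  have hppinv : p * (1/p) = 1 := mul_one_div_cancel hp0.ne'
  have h2 : A ^ (1/p) ≤ M * B ^ (1/p) := by
    calc A ^ (1/p) ≤ (M ^ p * B) ^ (1/p) :=
          Real.rpow_le_rpow hA.le hAB (by positivity)
      _ = (M ^ p) ^ (1/p) * B ^ (1/p) :=
          Real.mul_rpow (by positivity) hB.le
      _ = M * B ^ (1/p) := by
          rw [← Real.rpow_mul hM.le, hppinv, Real.rpow_one]
  have h1 : m * B ^ (1/p) ≤ A ^ (1/p) := by
    calc m * B ^ (1/p) = (m ^ p) ^ (1/p) * B ^ (1/p) := by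
          rw [← Real.rpow_mul hm.le, hppinv, Real.rpow_one]
      _ = (m ^ p * B) ^ (1/p) := (Real.mul_rpow (by positivity) hB.le).symm
      _ ≤ A ^ (1/p) := Real.rpow_le_rpow (by positivity) hBA (by positivity)
  have eA : A ^ (2/p) = (A ^ (1/p)) ^ 2 := by
    rw [← Real.rpow_natCast (A ^ (1/p)) 2, ← Real.rpow_mul hA.le]
    norm_num
    rw [inv_mul_eq_div]
  have eB : B ^ (2/p) = (B ^ (1/p)) ^ 2 := by
    rw [← Real.rpow_natCast (B ^ (1/p)) 2, ← Real.rpow_mul hB.le]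
    norm_num
    rw [inv_mul_eq_div]
  rw [eA, eB]
  exact two_var_key m M (A ^ (1/p)) (B ^ (1/p)) hm hmM hG h1 h2
end

section
/- Let α > 0, let 1 ≤ a < x be fixed reals, and let f : [a,x] → ℝ be continuous. Then as ρ → 0⁺, the generalized fractional integral with parameters β = α, κ = 0, η = 0, namely (ρ^(1−α)/Γ(α)) ∫_a^x t^(ρ−1) (x^ρ − t^ρ)^(α−1) f(t) dt, converges to the Hadamard fractional integral (1/Γ(α)) ∫_a^x (log(x/t))^(α−1) f(t)/t dt. -/
open MeasureTheory Filter

/-!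
Since `ρ ^ (1 - α) * (x ^ ρ - t ^ ρ) ^ (α - 1) = ((x ^ ρ - t ^ ρ) / ρ) ^ (α - 1)` and
`(x ^ ρ - t ^ ρ) / ρ` is a difference quotient of `ρ ↦ x ^ ρ - t ^ ρ` at `0`, the integrands converge
pointwise to the Hadamard integrand. Writing the quotient as `∫ s in t..x, s ^ (ρ - 1)` shows that
for `0 < ρ ≤ 1` and `1 ≤ t ≤ x` it lies between `log (x / t) ≥ (x - t) / x` and `x - t`, so the
integrands are dominated by a multiple of `(x - t) ^ (α - 1)`, integrable because `α > 0`.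
-/

open Set Real Topology Interval intervalIntegral

theorem integral_rpow_sub_one {ρ : ℝ} (hρ : 0 < ρ) (t x : ℝ) :
    ∫ s in t..x, s ^ (ρ - 1) = (x ^ ρ - t ^ ρ) / ρ := by
  rw [integral_rpow (Or.inl (by linarith)), sub_add_cancel]

theorem rpow_le_rpow_add_rpow_of_mem_Icc {lo hi y : ℝ} (hlo : 0 < lo) (hy : y ∈ Icc lo hi)
    (p : ℝ) : y ^ p ≤ lo ^ p + hi ^ p := by
  rcases le_total p 0 with hp | hp
  · exact (rpow_le_rpow_of_nonpos hlo hy.1 hp).trans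
      (le_add_of_nonneg_right (rpow_nonneg (hlo.le.trans (hy.1.trans hy.2)) p))
  · exact (rpow_le_rpow (hlo.le.trans hy.1) hy.2 hp).trans
      (le_add_of_nonneg_left (rpow_nonneg hlo.le p))

theorem sub_div_le_log_div {t x : ℝ} (ht : 0 < t) (hx : 0 < x) : (x - t) / x ≤ log (x / t) := by
  have h := one_sub_inv_le_log_of_pos (div_pos hx ht)
  rwa [inv_div, one_sub_div hx.ne'] at h

theorem ae_imp_of_forall_mem_Ioo {a b : ℝ} {P : ℝ → Prop} (hab : a ≤ b)
    (h : ∀ t ∈ Ioo a b, P t) : ∀ᵐ t, t ∈ Ι a b → P t := by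
  filter_upwards [Measure.ae_ne volume b] with t htb ht
  rw [uIoc_of_le hab] at ht
  exact h t ⟨ht.1, lt_of_le_of_ne ht.2 htb⟩

section DifferenceQuotient

variable {ρ t x : ℝ}

theorem log_div_le_rpow_sub_rpow_div (hρ : 0 < ρ) (ht : 1 ≤ t) (htx : t ≤ x) :
    log (x / t) ≤ (x ^ ρ - t ^ ρ) / ρ := by
  rw [← integral_inv_of_pos (by linarith) (by linarith), ← integral_rpow_sub_one hρ]
  refine integral_mono_on htx ?_ (intervalIntegrable_rpow' (by linarith)) fun s hs => ?_
  · exact intervalIntegrable_inv (fun s hs => by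
      rw [uIcc_of_le htx] at hs; linarith [hs.1]) continuousOn_id
  · rw [← rpow_neg_one]
    exact rpow_le_rpow_of_exponent_le (ht.trans hs.1) (by linarith)

theorem rpow_sub_rpow_div_le_sub (hρ : 0 < ρ) (hρ1 : ρ ≤ 1) (ht : 1 ≤ t) (htx : t ≤ x) :
    (x ^ ρ - t ^ ρ) / ρ ≤ x - t := by
  rw [← integral_rpow_sub_one hρ, ← integral_one (a := t) (b := x)]
  refine integral_mono_on htx (intervalIntegrable_rpow' (by linarith)) intervalIntegrable_const
    fun s hs => ?_
  exact rpow_le_one_of_one_le_of_nonpos (ht.trans hs.1) (by linarith)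

theorem tendsto_rpow_sub_rpow_div (ht : 0 < t) (hx : 0 < x) :
    Tendsto (fun ρ : ℝ => (x ^ ρ - t ^ ρ) / ρ) (𝓝[≠] 0) (𝓝 (log (x / t))) := by
  have hderiv : HasDerivAt (fun ρ : ℝ => x ^ ρ - t ^ ρ) (log (x / t)) 0 := by
    rw [log_div hx.ne' ht.ne']
    simpa only [rpow_zero, one_mul] using (hasStrictDerivAt_const_rpow hx 0).hasDerivAt.fun_sub
      (hasStrictDerivAt_const_rpow ht 0).hasDerivAt
  refine (hasDerivAt_iff_tendsto_slope.mp hderiv).congr fun ρ => ?_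
  simp [slope_def_field]

end DifferenceQuotient

/-- The kernel of the Katugampola integral with the factor `ρ ^ (1 - α)` absorbed. -/
noncomputable def katugampolaKernel (α x ρ t : ℝ) : ℝ :=
  t ^ (ρ - 1) * ((x ^ ρ - t ^ ρ) / ρ) ^ (α - 1)

section Kernel

variable {α ρ t x : ℝ}

theorem rpow_one_sub_mul_eq_katugampolaKernel (hρ : 0 < ρ) (ht : 0 ≤ t) (htx : t ≤ x) :
    ρ ^ (1 - α) * (t ^ (ρ - 1) * (x ^ ρ - t ^ ρ) ^ (α - 1)) = katugampolaKernel α x ρ t := by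
  have hdiff : 0 ≤ x ^ ρ - t ^ ρ := sub_nonneg.mpr (rpow_le_rpow ht htx hρ.le)
  rw [katugampolaKernel, div_rpow hdiff hρ.le, div_eq_mul_inv, ← rpow_neg hρ.le, neg_sub]
  ring

theorem abs_katugampolaKernel_le (hρ : 0 < ρ) (hρ1 : ρ ≤ 1) (ht : 1 ≤ t) (htx : t < x) :
    |katugampolaKernel α x ρ t| ≤ (x ^ (1 - α) + 1) * (x - t) ^ (α - 1) := by
  have hx : 0 < x := by linarith
  have hlo : (x - t) / x ≤ (x ^ ρ - t ^ ρ) / ρ :=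
    (sub_div_le_log_div (by linarith) hx).trans (log_div_le_rpow_sub_rpow_div hρ ht htx.le)
  have hquot : ((x ^ ρ - t ^ ρ) / ρ) ^ (α - 1) ≤ (x ^ (1 - α) + 1) * (x - t) ^ (α - 1) :=
    calc ((x ^ ρ - t ^ ρ) / ρ) ^ (α - 1) ≤ ((x - t) / x) ^ (α - 1) + (x - t) ^ (α - 1) :=
          rpow_le_rpow_add_rpow_of_mem_Icc (div_pos (by linarith) hx)
            ⟨hlo, rpow_sub_rpow_div_le_sub hρ hρ1 ht htx.le⟩ _
      _ = (x ^ (1 - α) + 1) * (x - t) ^ (α - 1) := by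
          rw [div_rpow (by linarith) hx.le, div_eq_mul_inv, ← rpow_neg hx.le, neg_sub]
          ring
  have hquot_nonneg : 0 ≤ ((x ^ ρ - t ^ ρ) / ρ) ^ (α - 1) :=
    rpow_nonneg ((div_pos (by linarith) hx).le.trans hlo) _
  rw [katugampolaKernel, abs_of_nonneg (mul_nonneg (rpow_nonneg (by linarith) _) hquot_nonneg)]
  exact (mul_le_of_le_one_left hquot_nonneg
    (rpow_le_one_of_one_le_of_nonpos ht (by linarith))).trans hquot

theorem tendsto_katugampolaKernel (ht : 0 < t) (htx : t < x) :
    Tendsto (fun ρ => katugampolaKernel α x ρ t) (𝓝[>] 0) (𝓝 (t⁻¹ * log (x / t) ^ (α - 1))) := by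
  have hρ : Tendsto (fun ρ : ℝ => ρ) (𝓝[>] 0) (𝓝 0) := tendsto_nhdsWithin_of_tendsto_nhds tendsto_id
  have hpow : Tendsto (fun ρ : ℝ => t ^ (ρ - 1)) (𝓝[>] 0) (𝓝 t⁻¹) := by
    simpa [rpow_neg_one] using tendsto_const_nhds.rpow (hρ.sub_const 1) (Or.inl ht.ne')
  have hquot := (tendsto_rpow_sub_rpow_div ht (ht.trans htx)).mono_left
    (nhdsWithin_mono _ fun ρ (hρ : 0 < ρ) => hρ.ne')
  exact hpow.mul (hquot.rpow_const (Or.inl (log_pos ((one_lt_div ht).mpr htx)).ne'))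

end Kernel

theorem tendsto_integral_katugampolaKernel_mul {α a x : ℝ} (hα : 0 < α) (ha : 1 ≤ a) (hax : a < x)
    {f : ℝ → ℝ} (hf : ContinuousOn f (Icc a x)) :
    Tendsto (fun ρ => ∫ t in a..x, katugampolaKernel α x ρ t * f t) (𝓝[>] 0)
      (𝓝 (∫ t in a..x, log (x / t) ^ (α - 1) * (f t / t))) := by
  obtain ⟨M, hM⟩ := isCompact_Icc.exists_bound_of_continuousOn hf
  have hM0 : 0 ≤ M := (norm_nonneg _).trans (hM a (left_mem_Icc.mpr hax.le))
  have hmeas_f : AEStronglyMeasurable f (volume.restrict (Ι a x)) := by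
    rw [uIoc_of_le hax.le]
    exact (hf.mono Ioc_subset_Icc_self).aestronglyMeasurable measurableSet_Ioc
  refine tendsto_integral_filter_of_dominated_convergence
    (fun t => M * ((x ^ (1 - α) + 1) * (x - t) ^ (α - 1))) ?_ ?_ ?_ ?_
  · refine Eventually.of_forall fun ρ => ?_
    have hmeas_kernel : Measurable (katugampolaKernel α x ρ) := by
      unfold katugampolaKernel; fun_prop
    exact hmeas_kernel.aestronglyMeasurable.mul hmeas_f
  · filter_upwards [Ioc_mem_nhdsGT zero_lt_one] with ρ hρ
    refine ae_imp_of_forall_mem_Ioo hax.le fun t ht => ?_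
    rw [norm_mul, mul_comm, Real.norm_eq_abs]
    exact mul_le_mul (hM t (Ioo_subset_Icc_self ht))
      (abs_katugampolaKernel_le hρ.1 hρ.2 (ha.trans ht.1.le) ht.2) (abs_nonneg _) hM0
  · have hpow := (intervalIntegrable_rpow' (a := x - a) (b := 0)
      (by linarith : (-1 : ℝ) < α - 1)).comp_sub_left x
    simpa using (hpow.const_mul (x ^ (1 - α) + 1)).const_mul M
  · refine ae_imp_of_forall_mem_Ioo hax.le fun t ht => ?_
    convert (tendsto_katugampolaKernel (by linarith [ht.1]) ht.2).mul_const (f t) using 2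
    ring

/-- As ρ → 0⁺, the generalized (Katugampola-type) fractional integral with
β = α, κ = 0, η = 0 converges to the Hadamard fractional integral. -/
theorem katugampola_tendsto_hadamard
    (α a x : ℝ) (hα : 0 < α) (ha : 1 ≤ a) (hax : a < x)
    (f : ℝ → ℝ) (hf : ContinuousOn f (Set.Icc a x)) :
    Tendsto
      (fun ρ : ℝ => (ρ ^ (1 - α) / Real.Gamma α) *
        ∫ t in a..x, t ^ (ρ - 1) * (x ^ ρ - t ^ ρ) ^ (α - 1) * f t)
      (nhdsWithin 0 (Set.Ioi 0))
      (nhds ((1 / Real.Gamma α) *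
        ∫ t in a..x, (Real.log (x / t)) ^ (α - 1) * (f t / t))) := by
  refine ((tendsto_integral_katugampolaKernel_mul hα ha hax hf).const_mul _).congr' ?_
  filter_upwards [self_mem_nhdsWithin] with ρ (hρ : 0 < ρ)
  have hkernel : ∀ t ∈ uIcc a x, katugampolaKernel α x ρ t * f t =
      ρ ^ (1 - α) * (t ^ (ρ - 1) * (x ^ ρ - t ^ ρ) ^ (α - 1) * f t) := fun t ht => by
    rw [uIcc_of_le hax.le] at ht
    rw [← rpow_one_sub_mul_eq_katugampolaKernel hρ (by linarith [ht.1]) ht.2]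
    ring
  rw [integral_congr hkernel, intervalIntegral.integral_const_mul]
  ring
end

section
/- Let α > 0, ρ > 0, η, κ, β ∈ ℝ, p ≥ 1, and 0 ≤ a < x. Let f, g be two positive functions on [a,x] such that I f^p(x) < ∞ and I g^p(x) < ∞, where I denotes the generalized fractional integral ρI^{α,β}_{a+,η,κ}. If there exist real constants 0 < m ≤ M such that m ≤ f(t)/g(t) ≤ M for all t ∈ [a,x], then (I f^p(x))^(1/p) + (I g^p(x))^(1/p) ≤ c₁ · (I (f+g)^p(x))^(1/p), where c₁ = (M(m+1) + (M+1)) / ((m+1)(M+1)). -/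
open MeasureTheory

/-- The left-sided generalized (Katugampola) fractional integral
`ρI^{α,β}_{a+,η,κ} f (x)`. -/
noncomputable def katI (α ρ η κ β a x : ℝ) (f : ℝ → ℝ) : ℝ :=
  (ρ ^ (1 - β) * x ^ κ / Real.Gamma α) *
    ∫ t in a..x, t ^ (ρ * (η + 1) - 1) * (x ^ ρ - t ^ ρ) ^ (α - 1) * f t

/-- Finiteness of the generalized fractional integral, expressed as integrability of the
kernel-weighted integrand. -/
def katIntegrable (α ρ η κ β a x : ℝ) (f : ℝ → ℝ) : Prop :=
  IntervalIntegrable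
    (fun t => t ^ (ρ * (η + 1) - 1) * (x ^ ρ - t ^ ρ) ^ (α - 1) * f t)
    volume a x

private lemma kernel_nonneg {ρ : ℝ} (hρ : 0 ≤ ρ) (η α a x t : ℝ) (ha : 0 ≤ a)
    (ht : t ∈ Set.Icc a x) :
    0 ≤ t ^ (ρ * (η + 1) - 1) * (x ^ ρ - t ^ ρ) ^ (α - 1) := by
  have ht0 : 0 ≤ t := le_trans ha ht.1
  exact mul_nonneg (Real.rpow_nonneg ht0 _)
    (Real.rpow_nonneg (sub_nonneg.2 (Real.rpow_le_rpow ht0 ht.2 hρ)) _)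

private lemma katI_nonneg {α ρ η κ β a x : ℝ} (hα : 0 < α) (hρ : 0 < ρ)
    (ha : 0 ≤ a) (hax : a ≤ x) (hx : 0 < x) {φ : ℝ → ℝ}
    (hφ : ∀ t ∈ Set.Icc a x, 0 ≤ φ t) :
    0 ≤ katI α ρ η κ β a x φ := by
  unfold katI
  have hC : 0 ≤ ρ ^ (1 - β) * x ^ κ / Real.Gamma α :=
    div_nonneg (mul_nonneg (Real.rpow_pos_of_pos hρ _).le (Real.rpow_pos_of_pos hx _).le)
      (Real.Gamma_pos_of_pos hα).le
  refine mul_nonneg hC (intervalIntegral.integral_nonneg hax fun u hu => ?_)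
  exact mul_nonneg (kernel_nonneg hρ.le η α a x u ha hu) (hφ u hu)

private lemma katI_le_mul {α ρ η κ β a x : ℝ} (hα : 0 < α) (hρ : 0 < ρ)
    (ha : 0 ≤ a) (hax : a < x) (c : ℝ) {φ ψ : ℝ → ℝ}
    (h : ∀ t ∈ Set.Icc a x, φ t ≤ c * ψ t)
    (hφ : katIntegrable α ρ η κ β a x φ) (hψ : katIntegrable α ρ η κ β a x ψ) :
    katI α ρ η κ β a x φ ≤ c * katI α ρ η κ β a x ψ := by
  have hx : 0 < x := lt_of_le_of_lt ha hax
  have hC : 0 ≤ ρ ^ (1 - β) * x ^ κ / Real.Gamma α :=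
    div_nonneg (mul_nonneg (Real.rpow_pos_of_pos hρ _).le (Real.rpow_pos_of_pos hx _).le)
      (Real.Gamma_pos_of_pos hα).le
  unfold katIntegrable at hφ hψ
  have hint : (∫ t in a..x, t ^ (ρ * (η + 1) - 1) * (x ^ ρ - t ^ ρ) ^ (α - 1) * φ t)
      ≤ ∫ t in a..x, c * (t ^ (ρ * (η + 1) - 1) * (x ^ ρ - t ^ ρ) ^ (α - 1) * ψ t) := by
    refine intervalIntegral.integral_mono_on hax.le hφ (hψ.const_mul c) fun t ht => ?_
    have hK := kernel_nonneg hρ.le η α a x t ha ht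
    calc t ^ (ρ * (η + 1) - 1) * (x ^ ρ - t ^ ρ) ^ (α - 1) * φ t
        ≤ t ^ (ρ * (η + 1) - 1) * (x ^ ρ - t ^ ρ) ^ (α - 1) * (c * ψ t) :=
          mul_le_mul_of_nonneg_left (h t ht) hK
      _ = c * (t ^ (ρ * (η + 1) - 1) * (x ^ ρ - t ^ ρ) ^ (α - 1) * ψ t) := by ring
  rw [intervalIntegral.integral_const_mul] at hint
  unfold katI
  calc (ρ ^ (1 - β) * x ^ κ / Real.Gamma α) *
      ∫ t in a..x, t ^ (ρ * (η + 1) - 1) * (x ^ ρ - t ^ ρ) ^ (α - 1) * φ t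
      ≤ (ρ ^ (1 - β) * x ^ κ / Real.Gamma α) *
        (c * ∫ t in a..x, t ^ (ρ * (η + 1) - 1) * (x ^ ρ - t ^ ρ) ^ (α - 1) * ψ t) :=
        mul_le_mul_of_nonneg_left hint hC
    _ = c * ((ρ ^ (1 - β) * x ^ κ / Real.Gamma α) *
        ∫ t in a..x, t ^ (ρ * (η + 1) - 1) * (x ^ ρ - t ^ ρ) ^ (α - 1) * ψ t) := by ring

/-- Reverse Minkowski inequality via the generalized fractional integral. -/
theorem reverse_minkowski_katugampola
    (α ρ η κ β p m M a x : ℝ) (hα : 0 < α) (hρ : 0 < ρ) (hp : 1 ≤ p)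
    (ha : 0 ≤ a) (hax : a < x)
    (f g : ℝ → ℝ)
    (hf_pos : ∀ t ∈ Set.Icc a x, 0 < f t)
    (hg_pos : ∀ t ∈ Set.Icc a x, 0 < g t)
    (hf_int : katIntegrable α ρ η κ β a x (fun t => f t ^ p))
    (hg_int : katIntegrable α ρ η κ β a x (fun t => g t ^ p))
    (hm : 0 < m) (hmM : m ≤ M)
    (hbound : ∀ t ∈ Set.Icc a x, m ≤ f t / g t ∧ f t / g t ≤ M) :
    (katI α ρ η κ β a x (fun t => f t ^ p)) ^ (1 / p) +
        (katI α ρ η κ β a x (fun t => g t ^ p)) ^ (1 / p) ≤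
      ((M * (m + 1) + (M + 1)) / ((m + 1) * (M + 1))) *
        (katI α ρ η κ β a x (fun t => (f t + g t) ^ p)) ^ (1 / p) := by
  have hx : 0 < x := lt_of_le_of_lt ha hax
  have hp0 : 0 < p := lt_of_lt_of_le one_pos hp
  have hM : 0 < M := lt_of_lt_of_le hm hmM
  have hM1 : (0:ℝ) < M + 1 := by linarith
  have hm1 : (0:ℝ) < m + 1 := by linarith
  -- pointwise bounds
  have hfb : ∀ t ∈ Set.Icc a x, f t ^ p ≤ (M/(M+1))^p * (f t + g t) ^ p := by
    intro t ht
    have hfp := hf_pos t ht; have hgp := hg_pos t ht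
    have h1 : f t ≤ M * g t := (div_le_iff₀ hgp).1 (hbound t ht).2
    have h2 : f t ≤ M/(M+1) * (f t + g t) := by
      rw [div_mul_eq_mul_div, le_div_iff₀ hM1]; nlinarith
    calc f t ^ p ≤ (M/(M+1) * (f t + g t)) ^ p :=
          Real.rpow_le_rpow hfp.le h2 hp0.le
      _ = (M/(M+1))^p * (f t + g t)^p :=
          Real.mul_rpow (div_nonneg hM.le hM1.le) (by linarith)
  have hgb : ∀ t ∈ Set.Icc a x, g t ^ p ≤ (1/(m+1))^p * (f t + g t) ^ p := by
    intro t ht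
    have hfp := hf_pos t ht; have hgp := hg_pos t ht
    have h1 : m * g t ≤ f t := (le_div_iff₀ hgp).1 (hbound t ht).1
    have h2 : g t ≤ 1/(m+1) * (f t + g t) := by
      rw [div_mul_eq_mul_div, le_div_iff₀ hm1]; nlinarith
    calc g t ^ p ≤ (1/(m+1) * (f t + g t)) ^ p :=
          Real.rpow_le_rpow hgp.le h2 hp0.le
      _ = (1/(m+1))^p * (f t + g t)^p :=
          Real.mul_rpow (by positivity) (by linarith)
  -- integrability of (f+g)^p
  have hfg_int : katIntegrable α ρ η κ β a x (fun t => (f t + g t) ^ p) := by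
    have hfi : IntegrableOn
        (fun t => t ^ (ρ * (η + 1) - 1) * (x ^ ρ - t ^ ρ) ^ (α - 1) * f t ^ p)
        (Set.Ioo a x) volume := by
      have h := hf_int
      rw [katIntegrable, intervalIntegrable_iff, Set.uIoc_of_le hax.le] at h
      exact h.mono_set Set.Ioo_subset_Ioc_self
    have hgi : IntegrableOn
        (fun t => t ^ (ρ * (η + 1) - 1) * (x ^ ρ - t ^ ρ) ^ (α - 1) * g t ^ p)
        (Set.Ioo a x) volume := by
      have h := hg_int
      rw [katIntegrable, intervalIntegrable_iff, Set.uIoc_of_le hax.le] at h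
      exact h.mono_set Set.Ioo_subset_Ioc_self
    have hmem : ∀ᵐ t ∂(volume.restrict (Set.Ioo a x)), t ∈ Set.Ioo a x :=
      ae_restrict_mem measurableSet_Ioo
    have hmeasΦ : AEStronglyMeasurable
        (fun t => ((t ^ (ρ * (η + 1) - 1) * (x ^ ρ - t ^ ρ) ^ (α - 1) * f t ^ p) ^ (1/p) +
            (t ^ (ρ * (η + 1) - 1) * (x ^ ρ - t ^ ρ) ^ (α - 1) * g t ^ p) ^ (1/p)) ^ p)
        (volume.restrict (Set.Ioo a x)) := by
      have h1 := hfi.aestronglyMeasurable.aemeasurable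
      have h2 := hgi.aestronglyMeasurable.aemeasurable
      exact (((h1.pow aemeasurable_const).add (h2.pow aemeasurable_const)).pow
        aemeasurable_const).aestronglyMeasurable
    have heq : (fun t => t ^ (ρ * (η + 1) - 1) * (x ^ ρ - t ^ ρ) ^ (α - 1) * (f t + g t) ^ p)
        =ᵐ[volume.restrict (Set.Ioo a x)]
        (fun t => ((t ^ (ρ * (η + 1) - 1) * (x ^ ρ - t ^ ρ) ^ (α - 1) * f t ^ p) ^ (1/p) +
            (t ^ (ρ * (η + 1) - 1) * (x ^ ρ - t ^ ρ) ^ (α - 1) * g t ^ p) ^ (1/p)) ^ p) := by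
      filter_upwards [hmem] with t ht
      have ht0 : 0 < t := lt_of_le_of_lt ha ht.1
      have htI : t ∈ Set.Icc a x := ⟨ht.1.le, ht.2.le⟩
      have hfp := hf_pos t htI; have hgp := hg_pos t htI
      have hKpos : 0 < t ^ (ρ * (η + 1) - 1) * (x ^ ρ - t ^ ρ) ^ (α - 1) :=
        mul_pos (Real.rpow_pos_of_pos ht0 _)
          (Real.rpow_pos_of_pos (sub_pos.2 (Real.rpow_lt_rpow ht0.le ht.2 hρ)) _)
      have e1 : (t ^ (ρ * (η + 1) - 1) * (x ^ ρ - t ^ ρ) ^ (α - 1) * f t ^ p) ^ (1/p)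
          = (t ^ (ρ * (η + 1) - 1) * (x ^ ρ - t ^ ρ) ^ (α - 1)) ^ (1/p) * f t := by
        rw [Real.mul_rpow hKpos.le (Real.rpow_nonneg hfp.le _),
          ← Real.rpow_mul hfp.le, mul_one_div_cancel hp0.ne', Real.rpow_one]
      have e2 : (t ^ (ρ * (η + 1) - 1) * (x ^ ρ - t ^ ρ) ^ (α - 1) * g t ^ p) ^ (1/p)
          = (t ^ (ρ * (η + 1) - 1) * (x ^ ρ - t ^ ρ) ^ (α - 1)) ^ (1/p) * g t := by
        rw [Real.mul_rpow hKpos.le (Real.rpow_nonneg hgp.le _),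
          ← Real.rpow_mul hgp.le, mul_one_div_cancel hp0.ne', Real.rpow_one]
      rw [e1, e2, ← mul_add, Real.mul_rpow (Real.rpow_nonneg hKpos.le _) (by linarith),
        ← Real.rpow_mul hKpos.le, one_div_mul_cancel hp0.ne', Real.rpow_one]
    have hbnd : ∀ᵐ t ∂(volume.restrict (Set.Ioo a x)),
        ‖t ^ (ρ * (η + 1) - 1) * (x ^ ρ - t ^ ρ) ^ (α - 1) * (f t + g t) ^ p‖ ≤
          (M+1)^p * (t ^ (ρ * (η + 1) - 1) * (x ^ ρ - t ^ ρ) ^ (α - 1) * g t ^ p) := by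
      filter_upwards [hmem] with t ht
      have htI : t ∈ Set.Icc a x := ⟨ht.1.le, ht.2.le⟩
      have hfp := hf_pos t htI; have hgp := hg_pos t htI
      have hK0 := kernel_nonneg hρ.le η α a x t ha htI
      have h1 : f t ≤ M * g t := (div_le_iff₀ hgp).1 (hbound t htI).2
      have h3 : (f t + g t)^p ≤ ((M+1) * g t)^p :=
        Real.rpow_le_rpow (by linarith) (by linarith) hp0.le
      rw [Real.mul_rpow hM1.le hgp.le] at h3
      have habs : ‖t ^ (ρ * (η + 1) - 1) * (x ^ ρ - t ^ ρ) ^ (α - 1) * (f t + g t) ^ p‖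
          = t ^ (ρ * (η + 1) - 1) * (x ^ ρ - t ^ ρ) ^ (α - 1) * (f t + g t) ^ p := by
        rw [Real.norm_eq_abs]
        exact abs_of_nonneg (mul_nonneg hK0 (Real.rpow_nonneg (by linarith) _))
      rw [habs]
      calc t ^ (ρ * (η + 1) - 1) * (x ^ ρ - t ^ ρ) ^ (α - 1) * (f t + g t) ^ p
          ≤ t ^ (ρ * (η + 1) - 1) * (x ^ ρ - t ^ ρ) ^ (α - 1) * ((M+1)^p * g t ^ p) :=
            mul_le_mul_of_nonneg_left h3 hK0
        _ = (M+1)^p * (t ^ (ρ * (η + 1) - 1) * (x ^ ρ - t ^ ρ) ^ (α - 1) * g t ^ p) := by ring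
    have hfgi : Integrable
        (fun t => t ^ (ρ * (η + 1) - 1) * (x ^ ρ - t ^ ρ) ^ (α - 1) * (f t + g t) ^ p)
        (volume.restrict (Set.Ioo a x)) :=
      Integrable.mono' (hgi.const_mul ((M+1)^p)) (hmeasΦ.congr heq.symm) hbnd
    rw [katIntegrable, intervalIntegrable_iff, Set.uIoc_of_le hax.le,
      integrableOn_Ioc_iff_integrableOn_Ioo]
    exact hfgi
  -- nonnegativity
  have hZ : 0 ≤ katI α ρ η κ β a x (fun t => (f t + g t) ^ p) :=
    katI_nonneg hα hρ ha hax.le hx fun t ht =>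
      Real.rpow_nonneg (by have := hf_pos t ht; have := hg_pos t ht; linarith) _
  have hF0 : 0 ≤ katI α ρ η κ β a x (fun t => f t ^ p) :=
    katI_nonneg hα hρ ha hax.le hx fun t ht => Real.rpow_nonneg (hf_pos t ht).le _
  have hG0 : 0 ≤ katI α ρ η κ β a x (fun t => g t ^ p) :=
    katI_nonneg hα hρ ha hax.le hx fun t ht => Real.rpow_nonneg (hg_pos t ht).le _
  have hA : katI α ρ η κ β a x (fun t => f t ^ p) ≤
      (M/(M+1))^p * katI α ρ η κ β a x (fun t => (f t + g t) ^ p) :=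
    katI_le_mul hα hρ ha hax _ hfb hf_int hfg_int
  have hB : katI α ρ η κ β a x (fun t => g t ^ p) ≤
      (1/(m+1))^p * katI α ρ η κ β a x (fun t => (f t + g t) ^ p) :=
    katI_le_mul hα hρ ha hax _ hgb hg_int hfg_int
  have hA' : (katI α ρ η κ β a x (fun t => f t ^ p)) ^ (1/p) ≤
      (M/(M+1)) * (katI α ρ η κ β a x (fun t => (f t + g t) ^ p)) ^ (1/p) := by
    calc (katI α ρ η κ β a x (fun t => f t ^ p)) ^ (1/p)
        ≤ ((M/(M+1))^p * katI α ρ η κ β a x (fun t => (f t + g t) ^ p)) ^ (1/p) :=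
          Real.rpow_le_rpow hF0 hA (by positivity)
      _ = (M/(M+1)) * (katI α ρ η κ β a x (fun t => (f t + g t) ^ p)) ^ (1/p) := by
          rw [Real.mul_rpow (by positivity) hZ, ← Real.rpow_mul (by positivity),
            mul_one_div_cancel hp0.ne', Real.rpow_one]
  have hB' : (katI α ρ η κ β a x (fun t => g t ^ p)) ^ (1/p) ≤
      (1/(m+1)) * (katI α ρ η κ β a x (fun t => (f t + g t) ^ p)) ^ (1/p) := by
    calc (katI α ρ η κ β a x (fun t => g t ^ p)) ^ (1/p)
        ≤ ((1/(m+1))^p * katI α ρ η κ β a x (fun t => (f t + g t) ^ p)) ^ (1/p) :=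
          Real.rpow_le_rpow hG0 hB (by positivity)
      _ = (1/(m+1)) * (katI α ρ η κ β a x (fun t => (f t + g t) ^ p)) ^ (1/p) := by
          rw [Real.mul_rpow (by positivity) hZ, ← Real.rpow_mul (by positivity),
            mul_one_div_cancel hp0.ne', Real.rpow_one]
  have hc : (M * (m + 1) + (M + 1)) / ((m + 1) * (M + 1)) = M/(M+1) + 1/(m+1) := by
    rw [div_add_div _ _ hM1.ne' hm1.ne', div_eq_div_iff (by positivity) (by positivity)]
    ring
  rw [hc, add_mul]
  exact add_le_add hA' hB'
end

section
/- Let α > 0, ρ > 0, η, κ, β ∈ ℝ, p, q > 1 with 1/p + 1/q = 1, and 0 ≤ a < x. Let f, g be two positive functions on [a,x] such that I f^p(x), I f^q(x), I g^p(x), I g^q(x) are all finite, where I denotes the generalized fractional integral ρI^{α,β}_{a+,η,κ}. If there exist real constants 0 < m ≤ M such that m ≤ f(t)/g(t) ≤ M for all t ∈ [a,x], then I(fg)(x) ≤ c₃ · I(f^p + g^p)(x) + c₄ · I(f^q + g^q)(x), where c₃ = 2^(p−1) M^p / (p (M+1)^p) and c₄ = 2^(q−1) / (q (m+1)^q). 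-/
open MeasureTheory

/-!
Pointwise, Young's inequality gives `f g ≤ f^p / p + g^q / q`. The ratio bound `f ≤ M g` means
`f ≤ M / (M + 1) · (f + g)`, and `m g ≤ f` means `g ≤ 1 / (m + 1) · (f + g)`; combined with the
power-mean inequality `(f + g)^r ≤ 2^(r-1) (f^r + g^r)` this bounds `f^p / p` by `c₃ (f^p + g^p)`
and `g^q / q` by `c₄ (f^q + g^q)`. The fractional integral has a nonnegative kernel and
coefficient, so it is monotone and linear, and the pointwise bound integrates.
-/

lemma Real.rpow_add_le_mul_rpow_add_rpow {a b p : ℝ} (ha : 0 ≤ a) (hb : 0 ≤ b) (hp : 1 ≤ p) :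
    (a + b) ^ p ≤ 2 ^ (p - 1) * (a ^ p + b ^ p) := by
  lift a to NNReal using ha
  lift b to NNReal using hb
  exact_mod_cast NNReal.rpow_add_le_mul_rpow_add_rpow a b hp

lemma rpow_le_mul_rpow_add_rpow_of_le_mul_add {u v c p : ℝ} (hu : 0 ≤ u) (hv : 0 ≤ v)
    (hc : 0 ≤ c) (hp : 1 ≤ p) (h : u ≤ c * (u + v)) :
    u ^ p ≤ 2 ^ (p - 1) * c ^ p * (u ^ p + v ^ p) :=
  calc u ^ p ≤ (c * (u + v)) ^ p := by gcongr
    _ = c ^ p * (u + v) ^ p := Real.mul_rpow hc (by positivity)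
    _ ≤ c ^ p * (2 ^ (p - 1) * (u ^ p + v ^ p)) := by
      gcongr; exact Real.rpow_add_le_mul_rpow_add_rpow hu hv hp
    _ = 2 ^ (p - 1) * c ^ p * (u ^ p + v ^ p) := by ring

lemma rpow_le_mul_rpow_add_rpow_of_le_mul {u v M p : ℝ} (hu : 0 ≤ u) (hv : 0 ≤ v) (hM : 0 ≤ M)
    (hp : 1 ≤ p) (h : u ≤ M * v) :
    u ^ p ≤ 2 ^ (p - 1) * M ^ p / (M + 1) ^ p * (u ^ p + v ^ p) := by
  have hle : u ≤ M / (M + 1) * (u + v) := by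
    rw [div_mul_eq_mul_div, le_div_iff₀ (by positivity)]
    linarith
  have := rpow_le_mul_rpow_add_rpow_of_le_mul_add hu hv (by positivity) hp hle
  rwa [Real.div_rpow hM (by positivity), ← mul_div_assoc] at this

lemma rpow_le_mul_rpow_add_rpow_of_mul_le {u v m p : ℝ} (hu : 0 ≤ u) (hv : 0 ≤ v) (hm : 0 ≤ m)
    (hp : 1 ≤ p) (h : m * v ≤ u) :
    v ^ p ≤ 2 ^ (p - 1) / (m + 1) ^ p * (u ^ p + v ^ p) := by
  have hle : v ≤ 1 / (m + 1) * (u + v) := by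
    rw [one_div_mul_eq_div, le_div_iff₀ (by positivity)]
    linarith
  have := rpow_le_mul_rpow_add_rpow_of_le_mul_add hv hu (by positivity) hp (add_comm u v ▸ hle)
  rwa [Real.div_rpow zero_le_one (by positivity), Real.one_rpow, mul_one_div, add_comm (v ^ p)]
    at this

lemma mul_le_of_ratio_bounds {p q m M F G : ℝ} (hpq : p.HolderConjugate q) (hm : 0 ≤ m)
    (hF : 0 ≤ F) (hG : 0 < G) (hmF : m ≤ F / G) (hFM : F / G ≤ M) :
    F * G ≤ (2 : ℝ) ^ (p - 1) * M ^ p / (p * (M + 1) ^ p) * (F ^ p + G ^ p) +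
      (2 : ℝ) ^ (q - 1) / (q * (m + 1) ^ q) * (F ^ q + G ^ q) := by
  have hp : 0 < p := hpq.left_pos
  have hq : 0 < q := hpq.right_pos
  have hFp : F ^ p ≤ 2 ^ (p - 1) * M ^ p / (M + 1) ^ p * (F ^ p + G ^ p) :=
    rpow_le_mul_rpow_add_rpow_of_le_mul hF hG.le (hm.trans (hmF.trans hFM)) hpq.lt.le
      ((div_le_iff₀ hG).mp hFM)
  have hGq : G ^ q ≤ 2 ^ (q - 1) / (m + 1) ^ q * (F ^ q + G ^ q) :=
    rpow_le_mul_rpow_add_rpow_of_mul_le hF hG.le hm hpq.symm.lt.le ((le_div_iff₀ hG).mp hmF)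
  calc F * G ≤ F ^ p / p + G ^ q / q := Real.young_inequality_of_nonneg hF hG.le hpq
    _ ≤ 2 ^ (p - 1) * M ^ p / (M + 1) ^ p * (F ^ p + G ^ p) / p +
          2 ^ (q - 1) / (m + 1) ^ q * (F ^ q + G ^ q) / q := by gcongr
    _ = _ := by field_simp

section katugampola

variable {α ρ η κ β a x : ℝ}

lemma katI_kernel_nonneg (hρ : 0 ≤ ρ) (ha : 0 ≤ a) {t : ℝ} (ht : t ∈ Set.Icc a x) :
    0 ≤ t ^ (ρ * (η + 1) - 1) * (x ^ ρ - t ^ ρ) ^ (α - 1) := by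
  have ht₀ : 0 ≤ t := ha.trans ht.1
  have hpow : t ^ ρ ≤ x ^ ρ := Real.rpow_le_rpow ht₀ ht.2 hρ
  exact mul_nonneg (Real.rpow_nonneg ht₀ _) (Real.rpow_nonneg (sub_nonneg.mpr hpow) _)

lemma katIntegrable.add {f g : ℝ → ℝ} (hf : katIntegrable α ρ η κ β a x f)
    (hg : katIntegrable α ρ η κ β a x g) :
    katIntegrable α ρ η κ β a x (fun t => f t + g t) := by
  unfold katIntegrable at *
  simpa only [mul_add] using hf.add hg

lemma katIntegrable.const_mul {f : ℝ → ℝ} (hf : katIntegrable α ρ η κ β a x f)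
    (c : ℝ) :
    katIntegrable α ρ η κ β a x (fun t => c * f t) := by
  unfold katIntegrable at *
  simpa only [mul_left_comm _ c] using hf.const_mul c

lemma katI_add {f g : ℝ → ℝ} (hf : katIntegrable α ρ η κ β a x f)
    (hg : katIntegrable α ρ η κ β a x g) :
    katI α ρ η κ β a x (fun t => f t + g t) =
      katI α ρ η κ β a x f + katI α ρ η κ β a x g := by
  unfold katI
  rw [← mul_add, ← intervalIntegral.integral_add hf hg]
  simp only [mul_add]

lemma katI_const_mul (c : ℝ) (f : ℝ → ℝ) :
    katI α ρ η κ β a x (fun t => c * f t) = c * katI α ρ η κ β a x f := by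
  simp only [katI, mul_left_comm _ c, intervalIntegral.integral_const_mul]

lemma katI_mono (hα : 0 < α) (hρ : 0 ≤ ρ) (ha : 0 ≤ a) (hax : a ≤ x) {f g : ℝ → ℝ}
    (hg : katIntegrable α ρ η κ β a x g) (hf₀ : ∀ t ∈ Set.Icc a x, 0 ≤ f t)
    (hfg : ∀ t ∈ Set.Icc a x, f t ≤ g t) :
    katI α ρ η κ β a x f ≤ katI α ρ η κ β a x g := by
  have hcoeff : 0 ≤ ρ ^ (1 - β) * x ^ κ / Real.Gamma α := by
    have := Real.Gamma_pos_of_pos hα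
    have := ha.trans hax
    positivity
  refine mul_le_mul_of_nonneg_left ?_ hcoeff
  by_cases hf : katIntegrable α ρ η κ β a x f
  · exact intervalIntegral.integral_mono_on hax hf hg fun t ht =>
      mul_le_mul_of_nonneg_left (hfg t ht) (katI_kernel_nonneg hρ ha ht)
  · -- the integral of a non-integrable function is `0`
    rw [intervalIntegral.integral_undef hf]
    exact intervalIntegral.integral_nonneg hax fun t ht =>
      mul_nonneg (katI_kernel_nonneg hρ ha ht) ((hf₀ t ht).trans (hfg t ht))

end katugampola

theorem product_inequality_katugampola_general
    (α ρ η κ β p q m M a x : ℝ) (hα : 0 < α) (hρ : 0 < ρ)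
    (hp : 1 < p) (hpq : 1 / p + 1 / q = 1)
    (ha : 0 ≤ a) (hax : a < x)
    (f g : ℝ → ℝ)
    (hf_pos : ∀ t ∈ Set.Icc a x, 0 < f t)
    (hg_pos : ∀ t ∈ Set.Icc a x, 0 < g t)
    (hfp_int : katIntegrable α ρ η κ β a x (fun t => f t ^ p))
    (hfq_int : katIntegrable α ρ η κ β a x (fun t => f t ^ q))
    (hgp_int : katIntegrable α ρ η κ β a x (fun t => g t ^ p))
    (hgq_int : katIntegrable α ρ η κ β a x (fun t => g t ^ q))
    (hm : 0 < m)
    (hbound : ∀ t ∈ Set.Icc a x, m ≤ f t / g t ∧ f t / g t ≤ M) :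
    katI α ρ η κ β a x (fun t => f t * g t) ≤
      ((2 : ℝ) ^ (p - 1) * M ^ p / (p * (M + 1) ^ p)) *
          katI α ρ η κ β a x (fun t => f t ^ p + g t ^ p) +
        ((2 : ℝ) ^ (q - 1) / (q * (m + 1) ^ q)) *
          katI α ρ η κ β a x (fun t => f t ^ q + g t ^ q) := by
  have hconj : p.HolderConjugate q :=
    Real.holderConjugate_iff.mpr ⟨hp, by simpa only [one_div] using hpq⟩
  have hp_int := hfp_int.add hgp_int
  have hq_int := hfq_int.add hgq_int
  rw [← katI_const_mul, ← katI_const_mul,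
    ← katI_add (hp_int.const_mul _) (hq_int.const_mul _)]
  refine katI_mono hα hρ.le ha hax.le ((hp_int.const_mul _).add (hq_int.const_mul _))
    (fun t ht => (mul_pos (hf_pos t ht) (hg_pos t ht)).le) fun t ht => ?_
  exact mul_le_of_ratio_bounds hconj hm.le (hf_pos t ht).le (hg_pos t ht) (hbound t ht).1
    (hbound t ht).2

/-- A product inequality via the generalized fractional integral. -/
theorem product_inequality_katugampola
    (α ρ η κ β p q m M a x : ℝ) (hα : 0 < α) (hρ : 0 < ρ)
    (hp : 1 < p) (hq : 1 < q) (hpq : 1 / p + 1 / q = 1)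
    (ha : 0 ≤ a) (hax : a < x)
    (f g : ℝ → ℝ)
    (hf_pos : ∀ t ∈ Set.Icc a x, 0 < f t)
    (hg_pos : ∀ t ∈ Set.Icc a x, 0 < g t)
    (hfp_int : katIntegrable α ρ η κ β a x (fun t => f t ^ p))
    (hfq_int : katIntegrable α ρ η κ β a x (fun t => f t ^ q))
    (hgp_int : katIntegrable α ρ η κ β a x (fun t => g t ^ p))
    (hgq_int : katIntegrable α ρ η κ β a x (fun t => g t ^ q))
    (hm : 0 < m) (hmM : m ≤ M)
    (hbound : ∀ t ∈ Set.Icc a x, m ≤ f t / g t ∧ f t / g t ≤ M) :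
    katI α ρ η κ β a x (fun t => f t * g t) ≤
      ((2 : ℝ) ^ (p - 1) * M ^ p / (p * (M + 1) ^ p)) *
          katI α ρ η κ β a x (fun t => f t ^ p + g t ^ p) +
        ((2 : ℝ) ^ (q - 1) / (q * (m + 1) ^ q)) *
          katI α ρ η κ β a x (fun t => f t ^ q + g t ^ q) :=
  product_inequality_katugampola_general α ρ η κ β p q m M a x hα hρ hp hpq ha hax f g hf_pos hg_pos
    hfp_int hfq_int hgp_int hgq_int hm hbound
end

section
/- Let α > 0, ρ > 0, η, κ, β ∈ ℝ, p ≥ 1, and 0 ≤ a < x. Let f, g be two positive functions on [a,x] such that I f^p(x) < ∞ and I g^p(x) < ∞, where I denotes the generalized fractional integral ρI^{α,β}_{a+,η,κ}. Suppose there exist real constants A, B, a₀, b₀ with 0 < a₀ ≤ f(t) ≤ A and 0 < b₀ ≤ g(t) ≤ B for all t ∈ [a,x]. Then (I f^p(x))^(1/p) + (I g^p(x))^(1/p) ≤ c₅ · (I (f+g)^p(x))^(1/p), where c₅ = (A(a₀+B) + B(A+b₀)) / ((A+b₀)(a₀+B)). -/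
open MeasureTheory

/-- Reverse Minkowski inequality with bounds on f and g separately. -/
theorem reverse_minkowski_bounded_katugampola
    (α ρ η κ β p A B a₀ b₀ a x : ℝ) (hα : 0 < α) (hρ : 0 < ρ) (hp : 1 ≤ p)
    (ha : 0 ≤ a) (hax : a < x)
    (f g : ℝ → ℝ)
    (hf_pos : ∀ t ∈ Set.Icc a x, 0 < f t)
    (hg_pos : ∀ t ∈ Set.Icc a x, 0 < g t)
    (hf_int : katIntegrable α ρ η κ β a x (fun t => f t ^ p))
    (hg_int : katIntegrable α ρ η κ β a x (fun t => g t ^ p))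
    (ha₀ : 0 < a₀) (hb₀ : 0 < b₀)
    (hfb : ∀ t ∈ Set.Icc a x, a₀ ≤ f t ∧ f t ≤ A)
    (hgb : ∀ t ∈ Set.Icc a x, b₀ ≤ g t ∧ g t ≤ B) :
    (katI α ρ η κ β a x (fun t => f t ^ p)) ^ (1 / p) +
        (katI α ρ η κ β a x (fun t => g t ^ p)) ^ (1 / p) ≤
      ((A * (a₀ + B) + B * (A + b₀)) / ((A + b₀) * (a₀ + B))) *
        (katI α ρ η κ β a x (fun t => (f t + g t) ^ p)) ^ (1 / p) := by
  have hx : 0 < x := lt_of_le_of_lt ha hax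
  have hp0 : (0:ℝ) < p := lt_of_lt_of_le one_pos hp
  have haI : a ∈ Set.Icc a x := ⟨le_refl a, hax.le⟩
  have hA : 0 < A := lt_of_lt_of_le (hf_pos a haI) (hfb a haI).2
  have hB : 0 < B := lt_of_lt_of_le (hg_pos a haI) (hgb a haI).2
  set K : ℝ → ℝ := fun t => t ^ (ρ * (η + 1) - 1) * (x ^ ρ - t ^ ρ) ^ (α - 1) with hK
  have hKnn : ∀ t ∈ Set.Icc a x, 0 ≤ K t := by
    intro t ht
    exact mul_nonneg (Real.rpow_nonneg (le_trans ha ht.1) _)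
      (Real.rpow_nonneg (sub_nonneg.mpr (Real.rpow_le_rpow (le_trans ha ht.1) ht.2 hρ.le)) _)
  have hKpos : ∀ t ∈ Set.Ioo a x, 0 < K t := by
    intro t ht
    exact mul_pos (Real.rpow_pos_of_pos (lt_of_le_of_lt ha ht.1) _)
      (Real.rpow_pos_of_pos (sub_pos.mpr (Real.rpow_lt_rpow (le_trans ha ht.1.le) ht.2 hρ)) _)
  -- integrability of the summed integrand
  have hu : IntegrableOn (fun t => K t * f t ^ p) (Set.Ioc a x) volume := by
    rw [← intervalIntegrable_iff_integrableOn_Ioc_of_le hax.le]; exact hf_int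
  have hv : IntegrableOn (fun t => K t * g t ^ p) (Set.Ioc a x) volume := by
    rw [← intervalIntegrable_iff_integrableOn_Ioc_of_le hax.le]; exact hg_int
  have hFm : Measurable (fun q : ℝ × ℝ =>
      if q.1 = 0 then (0:ℝ) else q.1 * (1 + (q.2 / q.1) ^ (1/p)) ^ p) := by
    refine Measurable.ite (measurableSet_eq_fun measurable_fst measurable_const)
      measurable_const ?_
    exact measurable_fst.mul
      ((measurable_const.add ((measurable_snd.div measurable_fst).pow
        measurable_const)).pow measurable_const)
  have huv : AEMeasurable (fun t => ((K t * f t ^ p), (K t * g t ^ p)))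
      (volume.restrict (Set.Ioc a x)) :=
    (hu.1.aemeasurable).prodMk (hv.1.aemeasurable)
  have hwm := hFm.comp_aemeasurable huv
  have hres : volume.restrict (Set.Ioc a x) = volume.restrict (Set.Ioo a x) :=
    Measure.restrict_congr_set Ioo_ae_eq_Ioc.symm
  have hae : (fun t => K t * (f t + g t) ^ p) =ᵐ[volume.restrict (Set.Ioc a x)]
      (fun q : ℝ × ℝ => if q.1 = 0 then (0:ℝ) else q.1 * (1 + (q.2 / q.1) ^ (1/p)) ^ p) ∘
        (fun t => ((K t * f t ^ p), (K t * g t ^ p))) := by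
    rw [hres]
    filter_upwards [ae_restrict_mem measurableSet_Ioo] with t ht
    have htI : t ∈ Set.Icc a x := ⟨ht.1.le, ht.2.le⟩
    have hKt := hKpos t ht
    have hft := hf_pos t htI
    have hgt := hg_pos t htI
    have hfp : 0 < f t ^ p := Real.rpow_pos_of_pos hft p
    have hu0 : K t * f t ^ p ≠ 0 := (mul_pos hKt hfp).ne'
    simp only [Function.comp_apply, if_neg hu0]
    have hdiv : (K t * g t ^ p) / (K t * f t ^ p) = (g t / f t) ^ p := by
      rw [mul_div_mul_left _ _ hKt.ne', ← Real.div_rpow hgt.le hft.le]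
    rw [hdiv, one_div, Real.rpow_rpow_inv (div_nonneg hgt.le hft.le) hp0.ne']
    have h1 : 1 + g t / f t = (f t + g t) / f t := by field_simp
    rw [h1, Real.div_rpow (by positivity) hft.le]
    field_simp
  have hsm : AEStronglyMeasurable (fun t => K t * (f t + g t) ^ p)
      (volume.restrict (Set.Ioc a x)) :=
    hwm.aestronglyMeasurable.congr hae.symm
  have hCnn : (0:ℝ) ≤ ((A + B) / a₀) ^ p := Real.rpow_nonneg (by positivity) p
  have hbound : ∀ᵐ t ∂(volume.restrict (Set.Ioc a x)),
      ‖K t * (f t + g t) ^ p‖ ≤ ‖((A + B) / a₀) ^ p * (K t * f t ^ p)‖ := by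
    filter_upwards [ae_restrict_mem measurableSet_Ioc] with t ht
    have htI : t ∈ Set.Icc a x := ⟨ht.1.le, ht.2⟩
    have hK0 := hKnn t htI
    have hft := hf_pos t htI
    have hgt := hg_pos t htI
    have hfgnn : (0:ℝ) ≤ f t + g t := by positivity
    rw [Real.norm_of_nonneg (mul_nonneg hK0 (Real.rpow_nonneg hfgnn p)),
      Real.norm_of_nonneg (mul_nonneg hCnn (mul_nonneg hK0 (Real.rpow_nonneg hft.le p)))]
    have hfg : f t + g t ≤ (A + B) / a₀ * f t := by
      have h1 : f t + g t ≤ A + B := add_le_add (hfb t htI).2 (hgb t htI).2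
      have h2 : A + B ≤ (A + B) / a₀ * f t := by
        rw [div_mul_eq_mul_div, le_div_iff₀ ha₀]
        nlinarith [(hfb t htI).1]
      linarith
    have h3 : (f t + g t) ^ p ≤ ((A + B) / a₀) ^ p * f t ^ p := by
      calc (f t + g t) ^ p ≤ ((A + B) / a₀ * f t) ^ p :=
            Real.rpow_le_rpow hfgnn hfg hp0.le
        _ = _ := Real.mul_rpow (by positivity) hft.le
    calc K t * (f t + g t) ^ p ≤ K t * (((A + B) / a₀) ^ p * f t ^ p) :=
          mul_le_mul_of_nonneg_left h3 hK0
      _ = ((A + B) / a₀) ^ p * (K t * f t ^ p) := by ring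
  have hfg_int : IntervalIntegrable (fun t => K t * (f t + g t) ^ p) volume a x := by
    rw [intervalIntegrable_iff_integrableOn_Ioc_of_le hax.le]
    exact Integrable.mono (hu.const_mul (((A + B) / a₀) ^ p)) hsm hbound
  -- basic facts about katI
  have hkat_eq : ∀ h : ℝ → ℝ, katI α ρ η κ β a x h =
      (ρ ^ (1 - β) * x ^ κ / Real.Gamma α) * ∫ t in a..x, K t * h t := fun h => rfl
  have hc₀ : 0 ≤ ρ ^ (1 - β) * x ^ κ / Real.Gamma α :=
    div_nonneg (mul_nonneg (Real.rpow_nonneg hρ.le _) (Real.rpow_nonneg hx.le _))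
      (Real.Gamma_pos_of_pos hα).le
  have hIfg_nn : 0 ≤ katI α ρ η κ β a x (fun t => (f t + g t) ^ p) := by
    rw [hkat_eq]
    refine mul_nonneg hc₀ (intervalIntegral.integral_nonneg hax.le ?_)
    intro t ht
    exact mul_nonneg (hKnn t ht)
      (Real.rpow_nonneg (add_pos (hf_pos t ht) (hg_pos t ht)).le p)
  -- the key one-function estimate
  have key : ∀ (F : ℝ → ℝ) (c : ℝ), 0 ≤ c →
      IntervalIntegrable (fun t => K t * F t ^ p) volume a x →
      (∀ t ∈ Set.Icc a x, 0 ≤ F t) →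
      (∀ t ∈ Set.Icc a x, F t ≤ c * (f t + g t)) →
      (katI α ρ η κ β a x fun t => F t ^ p) ^ (1/p) ≤
        c * (katI α ρ η κ β a x fun t => (f t + g t) ^ p) ^ (1/p) := by
    intro F c hc hFi hFnn hFle
    have hmono : ∫ t in a..x, K t * F t ^ p ≤
        c ^ p * ∫ t in a..x, K t * (f t + g t) ^ p := by
      rw [← intervalIntegral.integral_const_mul]
      refine intervalIntegral.integral_mono_on hax.le hFi (hfg_int.const_mul _) ?_
      intro t ht
      have hfgnn : (0:ℝ) ≤ f t + g t := (add_pos (hf_pos t ht) (hg_pos t ht)).le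
      have h1 : F t ^ p ≤ c ^ p * (f t + g t) ^ p := by
        calc F t ^ p ≤ (c * (f t + g t)) ^ p :=
              Real.rpow_le_rpow (hFnn t ht) (hFle t ht) hp0.le
          _ = _ := Real.mul_rpow hc hfgnn
      calc K t * F t ^ p ≤ K t * (c ^ p * (f t + g t) ^ p) :=
            mul_le_mul_of_nonneg_left h1 (hKnn t ht)
        _ = c ^ p * (K t * (f t + g t) ^ p) := by ring
    have hIF_nn : 0 ≤ katI α ρ η κ β a x (fun t => F t ^ p) := by
      rw [hkat_eq]
      refine mul_nonneg hc₀ (intervalIntegral.integral_nonneg hax.le ?_)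
      intro t ht
      exact mul_nonneg (hKnn t ht) (Real.rpow_nonneg (hFnn t ht) p)
    have h2 : katI α ρ η κ β a x (fun t => F t ^ p) ≤
        c ^ p * katI α ρ η κ β a x (fun t => (f t + g t) ^ p) := by
      rw [hkat_eq, hkat_eq]
      calc (ρ ^ (1 - β) * x ^ κ / Real.Gamma α) * ∫ t in a..x, K t * F t ^ p
          ≤ (ρ ^ (1 - β) * x ^ κ / Real.Gamma α) *
            (c ^ p * ∫ t in a..x, K t * (f t + g t) ^ p) :=
            mul_le_mul_of_nonneg_left hmono hc₀
        _ = c ^ p * ((ρ ^ (1 - β) * x ^ κ / Real.Gamma α) *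
            ∫ t in a..x, K t * (f t + g t) ^ p) := by ring
    calc (katI α ρ η κ β a x fun t => F t ^ p) ^ (1/p)
        ≤ (c ^ p * katI α ρ η κ β a x fun t => (f t + g t) ^ p) ^ (1/p) :=
          Real.rpow_le_rpow hIF_nn h2 (by positivity)
      _ = c * (katI α ρ η κ β a x fun t => (f t + g t) ^ p) ^ (1/p) := by
          rw [Real.mul_rpow (Real.rpow_nonneg hc p) hIfg_nn, one_div,
            Real.rpow_rpow_inv hc hp0.ne']
  have hAb : (0:ℝ) < A + b₀ := by positivity
  have haB : (0:ℝ) < a₀ + B := by positivity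
  have e1 : (katI α ρ η κ β a x fun t => f t ^ p) ^ (1/p) ≤
      (A / (A + b₀)) * (katI α ρ η κ β a x fun t => (f t + g t) ^ p) ^ (1/p) := by
    refine key f (A / (A + b₀)) (by positivity) hf_int (fun t ht => (hf_pos t ht).le) ?_
    intro t ht
    rw [div_mul_eq_mul_div, le_div_iff₀ hAb]
    nlinarith [(hfb t ht).1, (hfb t ht).2, (hgb t ht).1, hf_pos t ht, hg_pos t ht]
  have e2 : (katI α ρ η κ β a x fun t => g t ^ p) ^ (1/p) ≤
      (B / (a₀ + B)) * (katI α ρ η κ β a x fun t => (f t + g t) ^ p) ^ (1/p) := by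
    refine key g (B / (a₀ + B)) (by positivity) hg_int (fun t ht => (hg_pos t ht).le) ?_
    intro t ht
    rw [div_mul_eq_mul_div, le_div_iff₀ haB]
    nlinarith [(hgb t ht).1, (hgb t ht).2, (hfb t ht).1, hf_pos t ht, hg_pos t ht]
  have hsum : A / (A + b₀) + B / (a₀ + B) =
      (A * (a₀ + B) + B * (A + b₀)) / ((A + b₀) * (a₀ + B)) := by
    field_simp
  calc (katI α ρ η κ β a x (fun t => f t ^ p)) ^ (1 / p) +
        (katI α ρ η κ β a x (fun t => g t ^ p)) ^ (1 / p)
      ≤ (A / (A + b₀)) * (katI α ρ η κ β a x fun t => (f t + g t) ^ p) ^ (1/p) +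
        (B / (a₀ + B)) * (katI α ρ η κ β a x fun t => (f t + g t) ^ p) ^ (1/p) :=
        add_le_add e1 e2
    _ = (A / (A + b₀) + B / (a₀ + B)) *
        (katI α ρ η κ β a x fun t => (f t + g t) ^ p) ^ (1/p) := by ring
    _ = _ := by rw [hsum]
end

section
/- Let α > 0, ρ > 0, η, κ, β ∈ ℝ, p ≥ 1, and 0 ≤ a < x. Let f, g be two positive functions on [a,x] such that I f^p(x) < ∞ and I g^p(x) < ∞, where I denotes the generalized fractional integral ρI^{α,β}_{a+,η,κ}. If there exist real constants 0 < m ≤ M such that m ≤ f(t)/g(t) ≤ M for all t ∈ [a,x], then (I f^p(x))^(1/p) + (I g^p(x))^(1/p) ≤ 2 · (I(h^p)(x))^(1/p), where h(t) = max{ M·((M/m + 1)·f(t) − M·g(t)), ((m+M)·g(t) − f(t))/m } and h^p denotes t ↦ h(t)^p. -/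
open MeasureTheory

private lemma max_ge_f (m M u v : ℝ) (hm : 0 < m) (hmM : m ≤ M) (hu : 0 < u) (hv : 0 < v)
    (h1 : m * v ≤ u) (h2 : u ≤ M * v) :
    u ≤ max (M * ((M / m + 1) * u - M * v)) (((m + M) * v - u) / m) := by
  rcases le_total M 1 with hM | hM
  · refine le_max_of_le_right ?_
    rw [le_div_iff₀ hm]
    nlinarith [mul_le_mul_of_nonneg_left h2 (by linarith : (0:ℝ) ≤ m + 1),
      mul_nonneg (mul_nonneg hm.le (sub_nonneg.2 hM)) hv.le]
  · refine le_max_of_le_left ?_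
    have hM0 : (0:ℝ) ≤ M := hm.le.trans hmM
    have key : M * M * v ≤ M * (M / m) * u := by
      have h3 : M / m * (m * v) ≤ M / m * u :=
        mul_le_mul_of_nonneg_left h1 (div_nonneg hM0 hm.le)
      have h4 : M / m * (m * v) = M * v := by field_simp
      have h6 : M * (M / m * (m * v)) ≤ M * (M / m * u) :=
        mul_le_mul_of_nonneg_left h3 hM0
      rw [h4] at h6
      nlinarith [h6]
    have h5 : u ≤ M * u := le_mul_of_one_le_left hu.le hM
    nlinarith [key, h5]

private lemma max_ge_g (m M u v : ℝ) (hm : 0 < m) (hv : 0 < v) (h2 : u ≤ M * v) :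
    v ≤ max (M * ((M / m + 1) * u - M * v)) (((m + M) * v - u) / m) := by
  refine le_max_of_le_right ?_
  rw [le_div_iff₀ hm]
  linarith

private lemma max_le_C (m M u v : ℝ) (hm : 0 < m) (hmM : m ≤ M) (hu : 0 < u) (hv : 0 < v) :
    max (M * ((M / m + 1) * u - M * v)) (((m + M) * v - u) / m) ≤
      max (M * (M / m + 1)) ((m + M) / m) * (u + v) := by
  set C := max (M * (M / m + 1)) ((m + M) / m) with hC
  have hM0 : (0:ℝ) ≤ M := hm.le.trans hmM
  have hC2 : (m + M) / m ≤ C := le_max_right _ _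
  have hC0 : 0 ≤ C := le_trans (by positivity) hC2
  have hCm : m + M ≤ C * m := (div_le_iff₀ hm).mp hC2
  refine max_le ?_ ?_
  · have hC1 : M * (M / m + 1) ≤ C := le_max_left _ _
    have : M * (M / m + 1) * u ≤ C * u := mul_le_mul_of_nonneg_right hC1 hu.le
    nlinarith [mul_nonneg (mul_nonneg hM0 hM0) hv.le, mul_nonneg hC0 hv.le]
  · rw [div_le_iff₀ hm]
    nlinarith [mul_le_mul_of_nonneg_right hCm hv.le, mul_nonneg (mul_nonneg hC0 hm.le) hu.le]

open MeasureTheory in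
private lemma katI_aux (k f g : ℝ → ℝ) (p m M a x : ℝ)
    (hp : 1 ≤ p) (ha : 0 ≤ a) (hax : a < x) (hm : 0 < m) (hmM : m ≤ M)
    (hkm : Measurable k)
    (hknn : ∀ t ∈ Set.Icc a x, 0 ≤ k t)
    (hkpos : ∀ t ∈ Set.Ioo a x, 0 < k t)
    (hf_pos : ∀ t ∈ Set.Icc a x, 0 < f t)
    (hg_pos : ∀ t ∈ Set.Icc a x, 0 < g t)
    (hb : ∀ t ∈ Set.Icc a x, m * g t ≤ f t ∧ f t ≤ M * g t)
    (hf_int : IntervalIntegrable (fun t => k t * f t ^ p) volume a x)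
    (hg_int : IntervalIntegrable (fun t => k t * g t ^ p) volume a x) :
    (∫ t in a..x, k t * f t ^ p) ≤
      (∫ t in a..x, k t * (max (M * ((M / m + 1) * f t - M * g t))
          (((m + M) * g t - f t) / m)) ^ p) ∧
    (∫ t in a..x, k t * g t ^ p) ≤
      (∫ t in a..x, k t * (max (M * ((M / m + 1) * f t - M * g t))
          (((m + M) * g t - f t) / m)) ^ p) ∧
    0 ≤ (∫ t in a..x, k t * f t ^ p) ∧
    0 ≤ (∫ t in a..x, k t * g t ^ p) := by
  have hp0 : 0 < p := lt_of_lt_of_le one_pos hp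
  set C : ℝ := max (M * (M / m + 1)) ((m + M) / m) with hCdef
  set h : ℝ → ℝ := fun t => max (M * ((M / m + 1) * f t - M * g t))
      (((m + M) * g t - f t) / m) with hhdef
  have hC0 : 0 ≤ C := le_trans (div_pos (by linarith) hm).le (le_max_right _ _)
  have hIoc : Set.Ioc a x ⊆ Set.Icc a x := Set.Ioc_subset_Icc_self
  -- pointwise facts on Icc
  have hgh : ∀ t ∈ Set.Icc a x, g t ≤ h t := fun t ht =>
    max_ge_g m M (f t) (g t) hm (hg_pos t ht) (hb t ht).2
  have hfh : ∀ t ∈ Set.Icc a x, f t ≤ h t := fun t ht =>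
    max_ge_f m M (f t) (g t) hm hmM (hf_pos t ht) (hg_pos t ht) (hb t ht).1 (hb t ht).2
  have hh0 : ∀ t ∈ Set.Icc a x, 0 ≤ h t := fun t ht =>
    le_trans (hg_pos t ht).le (hgh t ht)
  have hhC : ∀ t ∈ Set.Icc a x, h t ≤ C * (f t + g t) := fun t ht =>
    max_le_C m M (f t) (g t) hm hmM (hf_pos t ht) (hg_pos t ht)
  have hhp : ∀ t ∈ Set.Icc a x, h t ^ p ≤ (2*C)^p * f t ^ p + (2*C)^p * g t ^ p := by
    intro t ht
    have hft := hf_pos t ht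
    have hgt := hg_pos t ht
    have h2C : (0:ℝ) ≤ (2*C)^p := Real.rpow_nonneg (by linarith) _
    rcases le_total (f t) (g t) with hc | hc
    · calc h t ^ p ≤ (2*C* g t) ^ p :=
            Real.rpow_le_rpow (hh0 t ht) (by nlinarith [hhC t ht]) hp0.le
        _ = (2*C)^p * g t ^ p := Real.mul_rpow (by linarith) hgt.le
        _ ≤ (2*C)^p * f t ^ p + (2*C)^p * g t ^ p :=
            le_add_of_nonneg_left (mul_nonneg h2C (Real.rpow_nonneg hft.le _))
    · calc h t ^ p ≤ (2*C* f t) ^ p :=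
            Real.rpow_le_rpow (hh0 t ht) (by nlinarith [hhC t ht]) hp0.le
        _ = (2*C)^p * f t ^ p := Real.mul_rpow (by linarith) hft.le
        _ ≤ (2*C)^p * f t ^ p + (2*C)^p * g t ^ p :=
            le_add_of_nonneg_right (mul_nonneg h2C (Real.rpow_nonneg hgt.le _))
  -- measurability
  set μ : Measure ℝ := volume.restrict (Set.Ioc a x) with hμdef
  have hμx : ∀ᵐ t ∂μ, t ∈ Set.Ioo a x := by
    have h1 : ∀ᵐ t ∂μ, t ∈ Set.Ioc a x := ae_restrict_mem measurableSet_Ioc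
    have h2v : ∀ᵐ t ∂(volume : Measure ℝ), t ≠ x := by
      refine ae_iff.mpr ?_
      simpa using (measure_singleton x : (volume : Measure ℝ) {x} = 0)
    have h2 : ∀ᵐ t ∂μ, t ≠ x := ae_restrict_of_ae h2v
    filter_upwards [h1, h2] with t ht1 ht2
    exact ⟨ht1.1, lt_of_le_of_ne ht1.2 ht2⟩
  have hFm : AEMeasurable (fun t => k t * f t ^ p) μ :=
    hf_int.1.aestronglyMeasurable.aemeasurable
  have hGm : AEMeasurable (fun t => k t * g t ^ p) μ :=
    hg_int.1.aestronglyMeasurable.aemeasurable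
  have hfp : AEMeasurable (fun t => f t ^ p) μ := by
    refine (hFm.div hkm.aemeasurable).congr ?_
    filter_upwards [hμx] with t ht
    exact mul_div_cancel_left₀ _ (hkpos t ht).ne'
  have hgp : AEMeasurable (fun t => g t ^ p) μ := by
    refine (hGm.div hkm.aemeasurable).congr ?_
    filter_upwards [hμx] with t ht
    exact mul_div_cancel_left₀ _ (hkpos t ht).ne'
  have hrpc : ∀ c : ℝ, Measurable fun y : ℝ => y ^ c := fun c =>
    measurable_id.pow measurable_const
  have hfm : AEMeasurable f μ := by
    refine ((hrpc (1/p)).comp_aemeasurable hfp).congr ?_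
    filter_upwards [hμx] with t ht
    have hft : 0 < f t := hf_pos t ⟨ht.1.le, ht.2.le⟩
    show (f t ^ p) ^ (1/p) = f t
    rw [← Real.rpow_mul hft.le, mul_one_div_cancel hp0.ne', Real.rpow_one]
  have hgm : AEMeasurable g μ := by
    refine ((hrpc (1/p)).comp_aemeasurable hgp).congr ?_
    filter_upwards [hμx] with t ht
    have hgt : 0 < g t := hg_pos t ⟨ht.1.le, ht.2.le⟩
    show (g t ^ p) ^ (1/p) = g t
    rw [← Real.rpow_mul hgt.le, mul_one_div_cancel hp0.ne', Real.rpow_one]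
  have hhmeas : AEMeasurable h μ :=
    (((hfm.const_mul (M/m+1)).sub (hgm.const_mul M)).const_mul M).max
      (((hgm.const_mul (m+M)).sub hfm).div_const m)
  have hKH : AEStronglyMeasurable (fun t => k t * h t ^ p) μ :=
    (hkm.aemeasurable.mul ((hrpc p).comp_aemeasurable hhmeas)).aestronglyMeasurable
  -- integrability of the h-side
  have hh_intOn : IntegrableOn (fun t => k t * h t ^ p) (Set.Ioc a x) volume := by
    refine Integrable.mono'
      ((hf_int.1.const_mul ((2*C)^p)).add (hg_int.1.const_mul ((2*C)^p))) hKH ?_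
    filter_upwards [ae_restrict_mem measurableSet_Ioc] with t ht
    have htI := hIoc ht
    have hk0 := hknn t htI
    rw [Real.norm_eq_abs, abs_of_nonneg (mul_nonneg hk0 (Real.rpow_nonneg (hh0 t htI) _))]
    calc k t * h t ^ p ≤ k t * ((2*C)^p * f t ^ p + (2*C)^p * g t ^ p) :=
          mul_le_mul_of_nonneg_left (hhp t htI) hk0
      _ = (2*C)^p * (k t * f t ^ p) + (2*C)^p * (k t * g t ^ p) := by ring
  have hh_int : IntervalIntegrable (fun t => k t * h t ^ p) volume a x :=
    (intervalIntegrable_iff_integrableOn_Ioc_of_le hax.le).mpr hh_intOn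
  refine ⟨?_, ?_, ?_, ?_⟩
  · refine intervalIntegral.integral_mono_on hax.le hf_int hh_int ?_
    intro t ht
    exact mul_le_mul_of_nonneg_left
      (Real.rpow_le_rpow (hf_pos t ht).le (hfh t ht) hp0.le) (hknn t ht)
  · refine intervalIntegral.integral_mono_on hax.le hg_int hh_int ?_
    intro t ht
    exact mul_le_mul_of_nonneg_left
      (Real.rpow_le_rpow (hg_pos t ht).le (hgh t ht) hp0.le) (hknn t ht)
  · refine intervalIntegral.integral_nonneg hax.le ?_
    intro t ht
    exact mul_nonneg (hknn t ht) (Real.rpow_nonneg (hf_pos t ht).le _)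
  · refine intervalIntegral.integral_nonneg hax.le ?_
    intro t ht
    exact mul_nonneg (hknn t ht) (Real.rpow_nonneg (hg_pos t ht).le _)

/-- Bound by the maximum-function h via the generalized fractional integral. -/
theorem max_function_bound_katugampola
    (α ρ η κ β p m M a x : ℝ) (hα : 0 < α) (hρ : 0 < ρ) (hp : 1 ≤ p)
    (ha : 0 ≤ a) (hax : a < x)
    (f g : ℝ → ℝ)
    (hf_pos : ∀ t ∈ Set.Icc a x, 0 < f t)
    (hg_pos : ∀ t ∈ Set.Icc a x, 0 < g t)
    (hf_int : katIntegrable α ρ η κ β a x (fun t => f t ^ p))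
    (hg_int : katIntegrable α ρ η κ β a x (fun t => g t ^ p))
    (hm : 0 < m) (hmM : m ≤ M)
    (hbound : ∀ t ∈ Set.Icc a x, m ≤ f t / g t ∧ f t / g t ≤ M) :
    (katI α ρ η κ β a x (fun t => f t ^ p)) ^ (1 / p) +
        (katI α ρ η κ β a x (fun t => g t ^ p)) ^ (1 / p) ≤
      2 * (katI α ρ η κ β a x
        (fun t => (max (M * ((M / m + 1) * f t - M * g t))
          (((m + M) * g t - f t) / m)) ^ p)) ^ (1 / p) := by
  have hp0 : 0 < p := lt_of_lt_of_le one_pos hp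
  have hx : 0 < x := ha.trans_lt hax
  have hkm : Measurable fun t : ℝ => t ^ (ρ * (η + 1) - 1) * (x ^ ρ - t ^ ρ) ^ (α - 1) :=
    (measurable_id.pow measurable_const).mul
      ((measurable_const.sub (measurable_id.pow measurable_const)).pow measurable_const)
  have hknn : ∀ t ∈ Set.Icc a x,
      0 ≤ t ^ (ρ * (η + 1) - 1) * (x ^ ρ - t ^ ρ) ^ (α - 1) := by
    intro t ht
    have ht0 : 0 ≤ t := ha.trans ht.1
    have hle : t ^ ρ ≤ x ^ ρ := Real.rpow_le_rpow ht0 ht.2 hρ.le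
    exact mul_nonneg (Real.rpow_nonneg ht0 _)
      (Real.rpow_nonneg (by linarith) _)
  have hkpos : ∀ t ∈ Set.Ioo a x,
      0 < t ^ (ρ * (η + 1) - 1) * (x ^ ρ - t ^ ρ) ^ (α - 1) := by
    intro t ht
    have ht0 : 0 < t := ha.trans_lt ht.1
    have hlt : t ^ ρ < x ^ ρ := Real.rpow_lt_rpow ht0.le ht.2 hρ
    exact mul_pos (Real.rpow_pos_of_pos ht0 _)
      (Real.rpow_pos_of_pos (by linarith) _)
  have hb : ∀ t ∈ Set.Icc a x, m * g t ≤ f t ∧ f t ≤ M * g t := by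
    intro t ht
    have hgt := hg_pos t ht
    obtain ⟨h1, h2⟩ := hbound t ht
    exact ⟨(le_div_iff₀ hgt).mp h1, (div_le_iff₀ hgt).mp h2⟩
  obtain ⟨hAH, hBH, hA0, hB0⟩ :=
    katI_aux (fun t : ℝ => t ^ (ρ * (η + 1) - 1) * (x ^ ρ - t ^ ρ) ^ (α - 1)) f g
      p m M a x hp ha hax hm hmM hkm hknn hkpos hf_pos hg_pos hb hf_int hg_int
  beta_reduce at hAH hBH hA0 hB0
  have hc : 0 ≤ ρ ^ (1 - β) * x ^ κ / Real.Gamma α :=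
    div_nonneg (mul_nonneg (Real.rpow_pos_of_pos hρ _).le
      (Real.rpow_pos_of_pos hx _).le) (Real.Gamma_pos_of_pos hα).le
  simp only [katI]
  have e1 : (0:ℝ) ≤ 1 / p := by positivity
  have h1 := Real.rpow_le_rpow (mul_nonneg hc hA0)
    (mul_le_mul_of_nonneg_left hAH hc) e1
  have h2 := Real.rpow_le_rpow (mul_nonneg hc hB0)
    (mul_le_mul_of_nonneg_left hBH hc) e1
  linarith
end

section
/- Let α > 0, ρ > 0, η, κ, β ∈ ℝ, p ≥ 1, and 0 ≤ a < x. Let f, g be two positive functions on [a,x] such that I g^p(x) < ∞ and I (f+g)^p(x) < ∞, where I denotes the generalized fractional integral ρI^{α,β}_{a+,η,κ}. If there exists a real constant m > 0 such that m ≤ f(t)/g(t) for all t ∈ [a,x], then (I g^p(x))^(1/p) ≤ (1/(m+1)) · (I (f+g)^p(x))^(1/p). -/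
open MeasureTheory

/-- Key lemma bounding `(I g^p)^(1/p)` by `(I (f+g)^p)^(1/p)`. -/
theorem g_bound_katugampola
    (α ρ η κ β p m a x : ℝ) (hα : 0 < α) (hρ : 0 < ρ) (hp : 1 ≤ p)
    (ha : 0 ≤ a) (hax : a < x)
    (f g : ℝ → ℝ)
    (hf_pos : ∀ t ∈ Set.Icc a x, 0 < f t)
    (hg_pos : ∀ t ∈ Set.Icc a x, 0 < g t)
    (hg_int : katIntegrable α ρ η κ β a x (fun t => g t ^ p))
    (hsum_int : katIntegrable α ρ η κ β a x (fun t => (f t + g t) ^ p))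
    (hm : 0 < m)
    (hbound : ∀ t ∈ Set.Icc a x, m ≤ f t / g t) :
    (katI α ρ η κ β a x (fun t => g t ^ p)) ^ (1 / p) ≤
      (1 / (m + 1)) * (katI α ρ η κ β a x (fun t => (f t + g t) ^ p)) ^ (1 / p) := by
  have hx : 0 < x := lt_of_le_of_lt ha hax
  have hp0 : 0 < p := lt_of_lt_of_le one_pos hp
  have hm1 : (0 : ℝ) < m + 1 := by linarith
  have hc : 0 < ρ ^ (1 - β) * x ^ κ / Real.Gamma α :=
    div_pos (mul_pos (Real.rpow_pos_of_pos hρ _) (Real.rpow_pos_of_pos hx _))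
      (Real.Gamma_pos_of_pos hα)
  -- kernel nonnegativity
  have hKnn : ∀ t ∈ Set.Icc a x,
      0 ≤ t ^ (ρ * (η + 1) - 1) * (x ^ ρ - t ^ ρ) ^ (α - 1) := by
    intro t ht
    have ht0 : 0 ≤ t := le_trans ha ht.1
    refine mul_nonneg (Real.rpow_nonneg ht0 _) (Real.rpow_nonneg ?_ _)
    have := Real.rpow_le_rpow ht0 ht.2 hρ.le
    linarith
  -- pointwise inequality
  have hptw : ∀ t ∈ Set.Icc a x,
      (m + 1) ^ p * (t ^ (ρ * (η + 1) - 1) * (x ^ ρ - t ^ ρ) ^ (α - 1) * g t ^ p) ≤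
        t ^ (ρ * (η + 1) - 1) * (x ^ ρ - t ^ ρ) ^ (α - 1) * (f t + g t) ^ p := by
    intro t ht
    have hg := hg_pos t ht
    have hf := hf_pos t ht
    have hmg : m * g t ≤ f t := (le_div_iff₀ hg).mp (hbound t ht)
    have h1 : (m + 1) * g t ≤ f t + g t := by nlinarith
    have h2 : ((m + 1) * g t) ^ p ≤ (f t + g t) ^ p :=
      Real.rpow_le_rpow (by positivity) h1 hp0.le
    rw [Real.mul_rpow hm1.le hg.le] at h2
    have := mul_le_mul_of_nonneg_left h2 (hKnn t ht)
    nlinarith [this]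
  -- integral inequality
  unfold katIntegrable at hg_int hsum_int
  have hint1 : IntervalIntegrable
      (fun t => (m + 1) ^ p *
        (t ^ (ρ * (η + 1) - 1) * (x ^ ρ - t ^ ρ) ^ (α - 1) * g t ^ p)) volume a x :=
    hg_int.const_mul _
  have hInt := intervalIntegral.integral_mono_on hax.le hint1 hsum_int hptw
  rw [intervalIntegral.integral_const_mul] at hInt
  -- nonnegativity of the integrals
  have hA0 : 0 ≤ ∫ t in a..x,
      t ^ (ρ * (η + 1) - 1) * (x ^ ρ - t ^ ρ) ^ (α - 1) * g t ^ p := by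
    apply intervalIntegral.integral_nonneg hax.le
    intro t ht
    exact mul_nonneg (hKnn t ht) (Real.rpow_nonneg (hg_pos t ht).le _)
  have hB0 : 0 ≤ ∫ t in a..x,
      t ^ (ρ * (η + 1) - 1) * (x ^ ρ - t ^ ρ) ^ (α - 1) * (f t + g t) ^ p := by
    apply intervalIntegral.integral_nonneg hax.le
    intro t ht
    exact mul_nonneg (hKnn t ht)
      (Real.rpow_nonneg (by nlinarith [hf_pos t ht, hg_pos t ht]) _)
  -- translate to katI
  set A := katI α ρ η κ β a x (fun t => g t ^ p) with hAdef
  set B := katI α ρ η κ β a x (fun t => (f t + g t) ^ p) with hBdef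
  have hA : 0 ≤ A := mul_nonneg hc.le hA0
  have hB : 0 ≤ B := mul_nonneg hc.le hB0
  have hkey : A ≤ (1 / (m + 1)) ^ p * B := by
    rw [hAdef, hBdef]
    simp only [katI]
    rw [Real.div_rpow (by norm_num) hm1.le, Real.one_rpow]
    rw [one_div, ← div_eq_inv_mul, le_div_iff₀ (Real.rpow_pos_of_pos hm1 p)]
    calc (ρ ^ (1 - β) * x ^ κ / Real.Gamma α *
          ∫ t in a..x, t ^ (ρ * (η + 1) - 1) * (x ^ ρ - t ^ ρ) ^ (α - 1) * g t ^ p)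
          * (m + 1) ^ p
        = (ρ ^ (1 - β) * x ^ κ / Real.Gamma α) *
          ((m + 1) ^ p * ∫ t in a..x,
            t ^ (ρ * (η + 1) - 1) * (x ^ ρ - t ^ ρ) ^ (α - 1) * g t ^ p) := by ring
      _ ≤ _ := mul_le_mul_of_nonneg_left hInt hc.le
  have hfinal := Real.rpow_le_rpow hA hkey (by positivity : (0:ℝ) ≤ 1 / p)
  rw [Real.mul_rpow (by positivity) hB,
    ← Real.rpow_mul (by positivity : (0:ℝ) ≤ 1 / (m + 1)),
    mul_one_div_cancel hp0.ne', Real.rpow_one] at hfinal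
  exact hfinal
end

section
/- Let α > 0, ρ > 0, η, κ, β ∈ ℝ, p ≥ 1, and 0 ≤ a < x. Let f, g be two positive functions on [a,x] such that I f^p(x) < ∞, I g^p(x) < ∞ and I (f+g)^p(x) < ∞, where I denotes the generalized fractional integral ρI^{α,β}_{a+,η,κ}. If there exist real constants 0 < m ≤ M such that m ≤ f(t)/g(t) ≤ M for all t ∈ [a,x], then ((M+1)(m+1)/M) · (I f^p(x))^(1/p) · (I g^p(x))^(1/p) ≤ (I (f+g)^p(x))^(2/p). -/
open MeasureTheory

/-- Product of the two key bounds via the generalized fractional integral. -/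
theorem product_bound_katugampola
    (α ρ η κ β p m M a x : ℝ) (hα : 0 < α) (hρ : 0 < ρ) (hp : 1 ≤ p)
    (ha : 0 ≤ a) (hax : a < x)
    (f g : ℝ → ℝ)
    (hf_pos : ∀ t ∈ Set.Icc a x, 0 < f t)
    (hg_pos : ∀ t ∈ Set.Icc a x, 0 < g t)
    (hf_int : katIntegrable α ρ η κ β a x (fun t => f t ^ p))
    (hg_int : katIntegrable α ρ η κ β a x (fun t => g t ^ p))
    (hsum_int : katIntegrable α ρ η κ β a x (fun t => (f t + g t) ^ p))
    (hm : 0 < m) (hmM : m ≤ M)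
    (hbound : ∀ t ∈ Set.Icc a x, m ≤ f t / g t ∧ f t / g t ≤ M) :
    ((M + 1) * (m + 1) / M) *
        ((katI α ρ η κ β a x (fun t => f t ^ p)) ^ (1 / p) *
          (katI α ρ η κ β a x (fun t => g t ^ p)) ^ (1 / p)) ≤
      (katI α ρ η κ β a x (fun t => (f t + g t) ^ p)) ^ (2 / p) := by
  have hx : 0 < x := lt_of_le_of_lt ha hax
  have hM : 0 < M := lt_of_lt_of_le hm hmM
  have hp0 : 0 < p := lt_of_lt_of_le one_pos hp
  set K : ℝ → ℝ := fun t => t ^ (ρ * (η + 1) - 1) * (x ^ ρ - t ^ ρ) ^ (α - 1) with hKdef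
  have hKnn : ∀ t ∈ Set.Icc a x, 0 ≤ K t := by
    intro t ht
    apply mul_nonneg (Real.rpow_nonneg (le_trans ha ht.1) _)
    apply Real.rpow_nonneg
    have : t ^ ρ ≤ x ^ ρ := Real.rpow_le_rpow (le_trans ha ht.1) ht.2 hρ.le
    linarith
  have hC : 0 < ρ ^ (1 - β) * x ^ κ / Real.Gamma α :=
    div_pos (mul_pos (Real.rpow_pos_of_pos hρ _) (Real.rpow_pos_of_pos hx _))
      (Real.Gamma_pos_of_pos hα)
  set C := ρ ^ (1 - β) * x ^ κ / Real.Gamma α with hCdef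
  set cM := M / (M + 1) with hcM
  set cm := 1 / (m + 1) with hcm
  have hcMpos : 0 < cM := div_pos hM (by linarith)
  have hcmpos : 0 < cm := div_pos one_pos (by linarith)
  -- pointwise bounds
  have hfs : ∀ t ∈ Set.Icc a x, f t ^ p ≤ cM ^ p * (f t + g t) ^ p := by
    intro t ht
    have hg := hg_pos t ht
    have hf := hf_pos t ht
    have h1 : f t ≤ M * g t := (div_le_iff₀ hg).mp (hbound t ht).2
    have h2 : f t ≤ cM * (f t + g t) := by
      rw [hcM, div_mul_eq_mul_div, le_div_iff₀ (by linarith : (0:ℝ) < M + 1)]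
      nlinarith
    calc f t ^ p ≤ (cM * (f t + g t)) ^ p :=
          Real.rpow_le_rpow hf.le h2 hp0.le
      _ = cM ^ p * (f t + g t) ^ p :=
          Real.mul_rpow hcMpos.le (by positivity)
  have hgs : ∀ t ∈ Set.Icc a x, g t ^ p ≤ cm ^ p * (f t + g t) ^ p := by
    intro t ht
    have hg := hg_pos t ht
    have hf := hf_pos t ht
    have h1 : m * g t ≤ f t := (le_div_iff₀ hg).mp (hbound t ht).1
    have h2 : g t ≤ cm * (f t + g t) := by
      rw [hcm, div_mul_eq_mul_div, le_div_iff₀ (by linarith : (0:ℝ) < m + 1)]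
      nlinarith
    calc g t ^ p ≤ (cm * (f t + g t)) ^ p :=
          Real.rpow_le_rpow hg.le h2 hp0.le
      _ = cm ^ p * (f t + g t) ^ p :=
          Real.mul_rpow hcmpos.le (by positivity)
  -- integrability, rephrased
  have hf_int' : IntervalIntegrable (fun t => K t * f t ^ p) volume a x := hf_int
  have hg_int' : IntervalIntegrable (fun t => K t * g t ^ p) volume a x := hg_int
  have hs_int' : IntervalIntegrable (fun t => K t * (f t + g t) ^ p) volume a x := hsum_int
  -- the three katI values
  have hkat : ∀ u : ℝ → ℝ, katI α ρ η κ β a x u = C * ∫ t in a..x, K t * u t := by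
    intro u; rfl
  set A := katI α ρ η κ β a x (fun t => f t ^ p) with hA
  set B := katI α ρ η κ β a x (fun t => g t ^ p) with hB
  set S := katI α ρ η κ β a x (fun t => (f t + g t) ^ p) with hS
  have hSnn : 0 ≤ S := by
    rw [hS, hkat]
    apply mul_nonneg hC.le
    apply intervalIntegral.integral_nonneg hax.le
    intro t ht
    exact mul_nonneg (hKnn t ht)
      (Real.rpow_nonneg (add_pos (hf_pos t ht) (hg_pos t ht)).le _)
  have hAnn : 0 ≤ A := by
    rw [hA, hkat]
    apply mul_nonneg hC.le
    apply intervalIntegral.integral_nonneg hax.le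
    intro t ht
    exact mul_nonneg (hKnn t ht) (Real.rpow_nonneg (hf_pos t ht).le _)
  have hBnn : 0 ≤ B := by
    rw [hB, hkat]
    apply mul_nonneg hC.le
    apply intervalIntegral.integral_nonneg hax.le
    intro t ht
    exact mul_nonneg (hKnn t ht) (Real.rpow_nonneg (hg_pos t ht).le _)
  -- integral comparisons
  have hAle : A ≤ cM ^ p * S := by
    rw [hA, hS, hkat, hkat, mul_left_comm]
    apply mul_le_mul_of_nonneg_left _ hC.le
    rw [← intervalIntegral.integral_const_mul]
    apply intervalIntegral.integral_mono_on hax.le hf_int' (hs_int'.const_mul _)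
    intro t ht
    calc K t * f t ^ p ≤ K t * (cM ^ p * (f t + g t) ^ p) :=
          mul_le_mul_of_nonneg_left (hfs t ht) (hKnn t ht)
      _ = cM ^ p * (K t * (f t + g t) ^ p) := by ring
  have hBle : B ≤ cm ^ p * S := by
    rw [hB, hS, hkat, hkat, mul_left_comm]
    apply mul_le_mul_of_nonneg_left _ hC.le
    rw [← intervalIntegral.integral_const_mul]
    apply intervalIntegral.integral_mono_on hax.le hg_int' (hs_int'.const_mul _)
    intro t ht
    calc K t * g t ^ p ≤ K t * (cm ^ p * (f t + g t) ^ p) :=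
          mul_le_mul_of_nonneg_left (hgs t ht) (hKnn t ht)
      _ = cm ^ p * (K t * (f t + g t) ^ p) := by ring
  -- rpow comparisons
  have hpinv : 0 ≤ 1 / p := by positivity
  have hcancel : ∀ c : ℝ, 0 ≤ c → (c ^ p) ^ (1 / p) = c := by
    intro c hc
    rw [← Real.rpow_mul hc, mul_one_div_cancel hp0.ne', Real.rpow_one]
  have hA' : A ^ (1 / p) ≤ cM * S ^ (1 / p) := by
    calc A ^ (1 / p) ≤ (cM ^ p * S) ^ (1 / p) :=
          Real.rpow_le_rpow hAnn hAle hpinv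
      _ = cM * S ^ (1 / p) := by
          rw [Real.mul_rpow (Real.rpow_nonneg hcMpos.le _) hSnn, hcancel cM hcMpos.le]
  have hB' : B ^ (1 / p) ≤ cm * S ^ (1 / p) := by
    calc B ^ (1 / p) ≤ (cm ^ p * S) ^ (1 / p) :=
          Real.rpow_le_rpow hBnn hBle hpinv
      _ = cm * S ^ (1 / p) := by
          rw [Real.mul_rpow (Real.rpow_nonneg hcmpos.le _) hSnn, hcancel cm hcmpos.le]
  have hprod : A ^ (1 / p) * B ^ (1 / p) ≤ (cM * cm) * S ^ (2 / p) := by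
    have h1 : A ^ (1 / p) * B ^ (1 / p) ≤ (cM * S ^ (1 / p)) * (cm * S ^ (1 / p)) :=
      mul_le_mul hA' hB' (Real.rpow_nonneg hBnn _)
        (mul_nonneg hcMpos.le (Real.rpow_nonneg hSnn _))
    have h2 : S ^ (1 / p) * S ^ (1 / p) = S ^ (2 / p) := by
      rw [← Real.rpow_add' hSnn (by positivity : 1 / p + 1 / p ≠ 0)]
      ring_nf
    calc A ^ (1 / p) * B ^ (1 / p) ≤ (cM * S ^ (1 / p)) * (cm * S ^ (1 / p)) := h1
      _ = (cM * cm) * (S ^ (1 / p) * S ^ (1 / p)) := by ring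
      _ = (cM * cm) * S ^ (2 / p) := by rw [h2]
  have hconst : ((M + 1) * (m + 1) / M) * (cM * cm) = 1 := by
    rw [hcM, hcm]
    field_simp
  calc ((M + 1) * (m + 1) / M) * (A ^ (1 / p) * B ^ (1 / p))
      ≤ ((M + 1) * (m + 1) / M) * ((cM * cm) * S ^ (2 / p)) := by
        apply mul_le_mul_of_nonneg_left hprod
        positivity
    _ = (((M + 1) * (m + 1) / M) * (cM * cm)) * S ^ (2 / p) := by ring
    _ = S ^ (2 / p) := by rw [hconst, one_mul]
end
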